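/- arXiv:2601.12187 — 13 statements merged into one kernel-verified Lean document; each statement's English description precedes it below -/
import Mathlib

section
/- Let ρ : F → [Ψ]^ω be a partition regular function and let x : Ψ → X be a sequence in a topological space X. Then every I_ρ-limit point of x is a ρ-limit point of x, i.e., Λ_x(I_ρ) ⊆ Λ_x(ρ). -/
open Set Filter Topology

variable {Ω Ψ X : Type*}

/-- A partition regular function `ρ : F → [Ψ]^ω`, encoded as a total function
`ρ : Set Ω → Set Ψ` whose relevant values are those on members of `F`. -/
structure IsPartitionRegular (F : Set (Set Ω)) (ρ : Set Ω → Set Ψ) : Prop where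
  nonempty : F.Nonempty
  mem_infinite : ∀ A ∈ F, A.Infinite
  diff_mem : ∀ A ∈ F, ∀ K : Set Ω, K.Finite → A \ K ∈ F
  image_infinite : ∀ A ∈ F, (ρ A).Infinite
  mono : ∀ E ∈ F, ∀ G ∈ F, E ⊆ G → ρ E ⊆ ρ G
  ramsey : ∀ G ∈ F, ∀ A B : Set Ψ, ρ G = A ∪ B → ∃ E ∈ F, ρ E ⊆ A ∨ ρ E ⊆ B
  shrink : ∀ G ∈ F, ∃ E ∈ F, E ⊆ G ∧ ∀ a ∈ ρ E, ∃ K : Set Ω, K.Finite ∧ a ∉ ρ (E \ K)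

/-- The ideal `I_ρ` generated by a partition regular function. -/
def genIdeal (F : Set (Set Ω)) (ρ : Set Ω → Set Ψ) : Set (Set Ψ) :=
  {S | ∀ G ∈ F, ¬ ρ G ⊆ S}

/-- `η` is a `ρ`-limit point of `x`. -/
def IsRhoLimitPoint [TopologicalSpace X] (F : Set (Set Ω)) (ρ : Set Ω → Set Ψ)
    (x : Ψ → X) (η : X) : Prop :=
  ∃ G ∈ F, ∀ U ∈ 𝓝 η, ∃ K : Set Ω, K.Finite ∧ ∀ s ∈ ρ (G \ K), x s ∈ U

/-- `η` is an `I`-limit point of `x`: some subsequence indexed by a set `S ∉ I`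
converges to `η` (that is, for every neighborhood `U` of `η`, all but finitely many
indices `s ∈ S` satisfy `x s ∈ U`). -/
def IsIdealLimitPoint [TopologicalSpace X] (I : Set (Set Ψ)) (x : Ψ → X) (η : X) : Prop :=
  ∃ S : Set Ψ, S ∉ I ∧ ∀ U ∈ 𝓝 η, {s ∈ S | x s ∉ U}.Finite

theorem lambda_ideal_subset_lambda_rho
    [Countable Ω] [Infinite Ω] [Countable Ψ] [Infinite Ψ] [TopologicalSpace X]
    (F : Set (Set Ω)) (ρ : Set Ω → Set Ψ) (hpr : IsPartitionRegular F ρ)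
    (x : Ψ → X) (η : X) (h : IsIdealLimitPoint (genIdeal F ρ) x η) :
    IsRhoLimitPoint F ρ x η := by
  obtain ⟨S, hS, hconv⟩ := h
  simp only [genIdeal, Set.mem_setOf_eq, not_forall] at hS
  obtain ⟨G, hG, hGS⟩ := hS
  push_neg at hGS
  obtain ⟨E, hE, hEG, hshrink⟩ := hpr.shrink G hG
  refine ⟨E, hE, fun U hU => ?_⟩
  have hT : {s ∈ S | x s ∉ U}.Finite := hconv U hU
  -- bad points in ρ E
  set T : Set Ψ := {s ∈ ρ E | x s ∉ U} with hTdef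
  have hTfin : T.Finite := by
    apply hT.subset
    intro a ha
    exact ⟨hGS (hpr.mono E hE G hG hEG ha.1), ha.2⟩
  choose! K hKfin hKnot using hshrink
  refine ⟨⋃ a ∈ T, K a, hTfin.biUnion (fun a ha => hKfin a ha.1), ?_⟩
  intro s hs
  by_contra hxs
  have hsE : s ∈ ρ E := hpr.mono _ (hpr.diff_mem E hE _ (hTfin.biUnion (fun a ha => hKfin a ha.1))) E hE diff_subset hs
  have hsT : s ∈ T := ⟨hsE, hxs⟩
  have h1 : E \ ⋃ a ∈ T, K a ∈ F := hpr.diff_mem E hE _ (hTfin.biUnion (fun a ha => hKfin a ha.1))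
  have h2 : E \ K s ∈ F := hpr.diff_mem E hE _ (hKfin s hsE)
  have hsub : E \ ⋃ a ∈ T, K a ⊆ E \ K s := by
    apply Set.diff_subset_diff_right
    exact Set.subset_biUnion_of_mem hsT
  exact hKnot s hsE (hpr.mono _ h1 _ h2 hsub hs)
end

section
/- Let ρ : F → [Ψ]^ω be a partition regular function. Then ρ is P⁺ if and only if ρ is both P^| and P⁻. -/
open Set Filter Topology

variable {Ω Ψ X : Type*}

/-- `ρ(G) ⊆^ρ B`: there is a finite `K ⊆ Ω` with `ρ(G∖K) ⊆ B`. -/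
def RhoSub (ρ : Set Ω → Set Ψ) (G : Set Ω) (B : Set Ψ) : Prop :=
  ∃ K : Set Ω, K.Finite ∧ ρ (G \ K) ⊆ B

/-- `ρ` is `P⁺`. -/
def IsPplus (F : Set (Set Ω)) (ρ : Set Ω → Set Ψ) : Prop :=
  ∀ A : ℕ → Set Ψ, (∀ n, A (n + 1) ⊆ A n) → (∀ n, A n ∉ genIdeal F ρ) →
    ∃ G ∈ F, ∀ n, RhoSub ρ G (A n)

/-- `ρ` is `P⁻`. -/
def IsPminus (F : Set (Set Ω)) (ρ : Set Ω → Set Ψ) : Prop :=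
  ∀ A : ℕ → Set Ψ, (∀ n, A (n + 1) ⊆ A n) → (∀ n, A n ∉ genIdeal F ρ) →
    (∀ n, A n \ A (n + 1) ∈ genIdeal F ρ) →
      ∃ G ∈ F, ∀ n, RhoSub ρ G (A n)

/-- `ρ` is `P^|`. -/
def IsPbar (F : Set (Set Ω)) (ρ : Set Ω → Set Ψ) : Prop :=
  ∀ A : ℕ → Set Ψ, (∀ n, A (n + 1) ⊆ A n) → (∀ n, A n ∉ genIdeal F ρ) →
    (∀ n, A n \ A (n + 1) ∉ genIdeal F ρ) →
      ∃ G ∈ F, ∀ n, RhoSub ρ G (A n)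

theorem pplus_iff_pbar_and_pminus
    [Countable Ω] [Infinite Ω] [Countable Ψ] [Infinite Ψ]
    (F : Set (Set Ω)) (ρ : Set Ω → Set Ψ) (hpr : IsPartitionRegular F ρ) :
    IsPplus F ρ ↔ (IsPbar F ρ ∧ IsPminus F ρ) := by
  constructor
  · intro h
    exact ⟨fun A h1 h2 _ => h A h1 h2, fun A h1 h2 _ => h A h1 h2⟩
  · rintro ⟨hbar, hminus⟩ A hdec hpos
    have hmono : ∀ {a b : ℕ}, a ≤ b → A b ⊆ A a := by
      intro a b hab
      induction hab with
      | refl => exact subset_rfl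
      | step _ ih => exact (hdec _).trans ih
    have hdown : ∀ {S T : Set Ψ}, S ⊆ T → T ∈ genIdeal F ρ → S ∈ genIdeal F ρ :=
      fun hST hT G hG hρ => hT G hG (hρ.trans hST)
    by_cases hc : ∀ n, ∃ m, n < m ∧ A n \ A m ∉ genIdeal F ρ
    · choose f hf1 hf2 using hc
      let g : ℕ → ℕ := fun k => Nat.rec 0 (fun _ n => f n) k
      have hgmono : ∀ k, g k < g (k + 1) := fun k => hf1 (g k)
      have hgk : ∀ k, k ≤ g k := by
        intro k
        induction k with
        | zero => exact Nat.zero_le _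
        | succ k ih => exact Nat.lt_of_le_of_lt ih (hgmono k)
      obtain ⟨G, hG, hGall⟩ := hbar (fun k => A (g k))
        (fun k => hmono (hgmono k).le)
        (fun k => hpos _)
        (fun k => hf2 (g k))
      refine ⟨G, hG, fun n => ?_⟩
      obtain ⟨K, hK, hKs⟩ := hGall n
      exact ⟨K, hK, hKs.trans (hmono (hgk n))⟩
    · push_neg at hc
      obtain ⟨N, hN⟩ := hc
      have hdiff : ∀ k, A (N + k) \ A (N + (k + 1)) ∈ genIdeal F ρ := by
        intro k
        have h1 : A (N + k) \ A (N + (k + 1)) ⊆ A N \ A (N + (k + 1)) :=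
          fun x hx => ⟨hmono (Nat.le_add_right N k) hx.1, hx.2⟩
        exact hdown h1 (hN _ (Nat.lt_add_of_pos_right (Nat.succ_pos k)))
      obtain ⟨G, hG, hGall⟩ := hminus (fun k => A (N + k))
        (fun k => hdec (N + k))
        (fun k => hpos _)
        hdiff
      refine ⟨G, hG, fun n => ?_⟩
      rcases le_or_gt n N with hle | hlt
      · obtain ⟨K, hK, hs⟩ := hGall 0
        exact ⟨K, hK, hs.trans (by simpa using hmono hle)⟩
      · obtain ⟨K, hK, hs⟩ := hGall (n - N)
        exact ⟨K, hK, hs.trans (by rw [Nat.add_sub_cancel' hlt.le])⟩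
end

section
/- Let X be a metric space with an accumulation point and let ρ : F → [Ψ]^ω be a partition regular function. Then ρ is P⁺ if and only if Λ_x(ρ) = Γ_x(ρ) for every sequence x : Ψ → X. -/
open Set Filter Topology

variable {Ω Ψ X : Type*}

/-- `η` is a `ρ`-cluster point of `x`. -/
def IsRhoClusterPoint [TopologicalSpace X] (F : Set (Set Ω)) (ρ : Set Ω → Set Ψ)
    (x : Ψ → X) (η : X) : Prop :=
  ∀ U ∈ 𝓝 η, ∃ G ∈ F, ρ G ⊆ {s | x s ∈ U}

theorem pplus_iff_lambda_eq_gamma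
    [Countable Ω] [Infinite Ω] [Countable Ψ] [Infinite Ψ]
    [MetricSpace X] (hacc : ∃ p : X, (𝓝[≠] p).NeBot)
    (F : Set (Set Ω)) (ρ : Set Ω → Set Ψ) (hpr : IsPartitionRegular F ρ) :
    IsPplus F ρ ↔
      ∀ x : Ψ → X, {η | IsRhoLimitPoint F ρ x η} = {η | IsRhoClusterPoint F ρ x η} := by
  classical
  obtain ⟨p, hp⟩ := hacc
  have key : ∀ ε : ℝ, 0 < ε → ∃ z : X, z ≠ p ∧ dist z p < ε := by
    intro ε hε
    have h1 : Metric.ball p ε ∩ {p}ᶜ ∈ 𝓝[≠] p :=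
      Filter.inter_mem (mem_nhdsWithin_of_mem_nhds (Metric.ball_mem_nhds p hε))
        self_mem_nhdsWithin
    obtain ⟨z, hz1, hz2⟩ := Filter.nonempty_of_mem h1
    exact ⟨z, hz2, Metric.mem_ball.mp hz1⟩
  have hposn : ∀ n : ℕ, (0 : ℝ) < 1 / (n + 1) := by
    intro n; positivity
  constructor
  · -- P⁺ → Λ = Γ
    intro hP x
    ext η
    simp only [mem_setOf_eq]
    constructor
    · rintro ⟨G, hG, hlim⟩ U hU
      obtain ⟨K, hKfin, hK⟩ := hlim U hU
      exact ⟨G \ K, hpr.diff_mem G hG K hKfin, hK⟩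
    · intro hcl
      set A : ℕ → Set Ψ := fun n => {s | x s ∈ Metric.ball η (1 / (n + 1))} with hA
      have hdec : ∀ n, A (n + 1) ⊆ A n := by
        intro n s hs
        simp only [hA, mem_setOf_eq, Metric.mem_ball] at hs ⊢
        refine lt_of_lt_of_le hs ?_
        apply one_div_le_one_div_of_le
        · positivity
        · push_cast; linarith
      have hni : ∀ n, A n ∉ genIdeal F ρ := by
        intro n hmem
        obtain ⟨G, hG, hsub⟩ := hcl (Metric.ball η (1 / (n + 1)))
          (Metric.ball_mem_nhds η (hposn n))
        exact hmem G hG hsub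
      obtain ⟨G, hG, hGsub⟩ := hP A hdec hni
      refine ⟨G, hG, fun U hU => ?_⟩
      obtain ⟨ε, hε, hball⟩ := Metric.mem_nhds_iff.mp hU
      obtain ⟨n, hn⟩ := exists_nat_one_div_lt hε
      obtain ⟨K, hKfin, hK⟩ := hGsub n
      refine ⟨K, hKfin, fun s hs => ?_⟩
      have hsA : s ∈ A n := hK hs
      simp only [hA, mem_setOf_eq, Metric.mem_ball] at hsA
      exact hball (Metric.mem_ball.mpr (lt_trans hsA hn))
  · -- Λ = Γ → P⁺
    intro hΛΓ A hdec hni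
    have hanti : Antitone A := antitone_nat_of_succ_le hdec
    choose y hy_ne hy_d using fun n : ℕ => key (1 / (n + 1)) (hposn n)
    set x : Ψ → X := fun s => if h : ∃ m, s ∉ A m then y (Nat.find h) else p with hx
    -- p is a cluster point of x
    have hclu : IsRhoClusterPoint F ρ x p := by
      intro U hU
      obtain ⟨ε, hε, hball⟩ := Metric.mem_nhds_iff.mp hU
      obtain ⟨N, hN⟩ := exists_nat_one_div_lt hε
      have hAN := hni N
      simp only [genIdeal, mem_setOf_eq, not_forall] at hAN
      obtain ⟨G, hG, hsub⟩ := hAN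
      push_neg at hsub
      refine ⟨G, hG, fun s hs => ?_⟩
      have hsN : s ∈ A N := hsub hs
      by_cases h : ∃ m, s ∉ A m
      · show (if h : ∃ m, s ∉ A m then y (Nat.find h) else p) ∈ U
        rw [dif_pos h]
        have hfind : N < Nat.find h := by
          rw [Nat.lt_find_iff]
          intro m hm hnot
          exact hnot (hanti hm hsN)
        apply hball
        rw [Metric.mem_ball]
        refine lt_trans (lt_of_lt_of_le (hy_d (Nat.find h)) ?_) hN
        apply one_div_le_one_div_of_le
        · positivity
        · have : (N : ℝ) < Nat.find h := by exact_mod_cast hfind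
          linarith
      · show (if h : ∃ m, s ∉ A m then y (Nat.find h) else p) ∈ U
        rw [dif_neg h]
        apply hball
        rw [Metric.mem_ball, dist_self]
        exact hε
    -- hence p is a limit point
    have hlimp : IsRhoLimitPoint F ρ x p := by
      have := Set.ext_iff.mp (hΛΓ x) p
      exact this.mpr hclu
    obtain ⟨G, hG, hlim⟩ := hlimp
    refine ⟨G, hG, fun n => ?_⟩
    have hne : (Finset.range (n + 1)).Nonempty := ⟨0, by simp⟩
    set r : ℝ := (Finset.range (n + 1)).inf' hne (fun k => dist (y k) p) with hr
    have hr_pos : 0 < r := by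
      rw [hr, Finset.lt_inf'_iff]
      exact fun k _ => dist_pos.mpr (hy_ne k)
    obtain ⟨K, hKfin, hK⟩ := hlim (Metric.ball p r) (Metric.ball_mem_nhds p hr_pos)
    refine ⟨K, hKfin, fun s hs => ?_⟩
    have hxU := hK s hs
    by_cases h : ∃ m, s ∉ A m
    · have hxv : x s = y (Nat.find h) := dif_pos h
      rw [hxv, Metric.mem_ball] at hxU
      have hgt : n < Nat.find h := by
        by_contra hle
        push_neg at hle
        have : r ≤ dist (y (Nat.find h)) p :=
          Finset.inf'_le _ (Finset.mem_range.mpr (Nat.lt_succ_of_le hle))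
        linarith
      have := Nat.find_min h hgt
      exact not_not.mp this
    · push_neg at h
      exact h n
end

section
/- Let X be a metric space with an accumulation point and let ρ : F → [Ψ]^ω be a partition regular function. Then ρ is P^| if and only if Λ_x(ρ) is a closed subset of X for every sequence x : Ψ → X. -/
open Set Filter Topology

variable {Ω Ψ X : Type*}

lemma my_not_mem_genIdeal {F : Set (Set Ω)} {ρ : Set Ω → Set Ψ} {S : Set Ψ} :
    S ∉ genIdeal F ρ ↔ ∃ G ∈ F, ρ G ⊆ S := by
  simp [genIdeal]

lemma my_pbar_closed [MetricSpace X] {F : Set (Set Ω)} {ρ : Set Ω → Set Ψ}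
    (hpr : IsPartitionRegular F ρ) (hP : IsPbar F ρ) (x : Ψ → X) :
    IsClosed {η | IsRhoLimitPoint F ρ x η} := by
  refine isClosed_of_closure_subset ?_
  intro η hη
  by_cases hmem : IsRhoLimitPoint F ρ x η
  · exact hmem
  -- key step
  have key : ∀ ε : ℝ, 0 < ε → ∃ ε', 0 < ε' ∧ ε' ≤ ε / 2 ∧
      ∃ E ∈ F, ∀ s ∈ ρ E, ε' ≤ dist (x s) η ∧ dist (x s) η < ε := by
    intro ε hε
    obtain ⟨η', hη'Λ, hd⟩ := Metric.mem_closure_iff.mp hη (ε / 2) (by linarith)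
    have hne : η' ≠ η := by
      rintro rfl; exact hmem hη'Λ
    set d := dist η' η with hd0
    have hdpos : 0 < d := dist_pos.mpr hne
    have hdlt : d < ε / 2 := by rwa [dist_comm] at hd
    obtain ⟨G, hG, hGp⟩ := hη'Λ
    obtain ⟨K, hKfin, hKs⟩ := hGp (Metric.ball η' (d / 2)) (Metric.ball_mem_nhds _ (by linarith))
    refine ⟨d / 2, by linarith, by linarith, G \ K, hpr.diff_mem G hG K hKfin, ?_⟩
    intro s hs
    have h1 : dist (x s) η' < d / 2 := hKs s hs
    have h2 : d ≤ dist η' (x s) + dist (x s) η := dist_triangle _ _ _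
    rw [dist_comm η' (x s)] at h2
    have h3 : dist (x s) η ≤ dist (x s) η' + d := dist_triangle _ _ _
    constructor <;> linarith
  -- build the sequence of radii
  let f : ℕ → {e : ℝ // 0 < e} := fun n =>
    Nat.rec (motive := fun _ => {e : ℝ // 0 < e}) ⟨1, one_pos⟩
      (fun _ prev => ⟨(key prev.1 prev.2).choose, (key prev.1 prev.2).choose_spec.1⟩) n
  have hfspec : ∀ n, (f (n + 1)).1 ≤ (f n).1 / 2 ∧
      ∃ E ∈ F, ∀ s ∈ ρ E, (f (n + 1)).1 ≤ dist (x s) η ∧ dist (x s) η < (f n).1 := by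
    intro n
    exact ⟨(key (f n).1 (f n).2).choose_spec.2.1, (key (f n).1 (f n).2).choose_spec.2.2⟩
  set A : ℕ → Set Ψ := fun n => {s | dist (x s) η < (f n).1} with hA
  have hdec : ∀ n, A (n + 1) ⊆ A n := by
    intro n s hs
    have h1 := (hfspec n).1
    have := (f (n + 1)).2
    simp only [hA, mem_setOf_eq] at hs ⊢
    linarith [(f n).2]
  have hdiffpos : ∀ n, A n \ A (n + 1) ∉ genIdeal F ρ := by
    intro n
    obtain ⟨E, hE, hEs⟩ := (hfspec n).2
    refine my_not_mem_genIdeal.mpr ⟨E, hE, ?_⟩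
    intro s hs
    obtain ⟨h1, h2⟩ := hEs s hs
    exact ⟨h2, by simp only [hA, mem_setOf_eq]; linarith⟩
  have hpos : ∀ n, A n ∉ genIdeal F ρ := by
    intro n
    obtain ⟨E, hE, hEs⟩ := my_not_mem_genIdeal.mp (hdiffpos n)
    exact my_not_mem_genIdeal.mpr ⟨E, hE, fun s hs => (hEs hs).1⟩
  obtain ⟨G, hG, hGn⟩ := hP A hdec hpos hdiffpos
  refine ⟨G, hG, ?_⟩
  intro U hU
  obtain ⟨δ, hδ, hball⟩ := Metric.mem_nhds_iff.mp hU
  have hbound : ∀ n, (f n).1 ≤ (1 / 2 : ℝ) ^ n := by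
    intro n
    induction n with
    | zero => simp [f]
    | succ k ih =>
      have := (hfspec k).1
      have : (f (k + 1)).1 ≤ (1 / 2 : ℝ) ^ k / 2 := by linarith
      calc (f (k + 1)).1 ≤ (1 / 2 : ℝ) ^ k / 2 := this
        _ = (1 / 2 : ℝ) ^ (k + 1) := by ring
  obtain ⟨n, hn⟩ := exists_pow_lt_of_lt_one hδ (by norm_num : (1 / 2 : ℝ) < 1)
  obtain ⟨K, hKfin, hKs⟩ := hGn n
  refine ⟨K, hKfin, ?_⟩
  intro s hs
  have := hKs hs
  simp only [hA, mem_setOf_eq] at this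
  apply hball
  have : dist (x s) η < δ := lt_of_lt_of_le (lt_of_lt_of_le this (hbound n)) (le_of_lt hn)
  exact Metric.mem_ball.mpr this

lemma my_closed_pbar [MetricSpace X] (hacc : ∃ p : X, (𝓝[≠] p).NeBot)
    {F : Set (Set Ω)} {ρ : Set Ω → Set Ψ} (hpr : IsPartitionRegular F ρ)
    (hcl : ∀ x : Ψ → X, IsClosed {η | IsRhoLimitPoint F ρ x η}) :
    IsPbar F ρ := by
  classical
  obtain ⟨p, hp⟩ := hacc
  intro A hdec hpos hdiffpos
  -- points q n ≠ p with dist (q n) p < 1/(n+1)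
  have hq : ∀ n : ℕ, ∃ q : X, q ≠ p ∧ dist q p < 1 / (n + 1) := by
    intro n
    have hball : Metric.ball p (1 / (n + 1)) ∈ 𝓝 p :=
      Metric.ball_mem_nhds _ (by positivity)
    have h1 : Metric.ball p (1 / (n + 1)) ∈ 𝓝[≠] p :=
      mem_nhdsWithin_of_mem_nhds hball
    have h2 : ({p}ᶜ : Set X) ∈ 𝓝[≠] p := self_mem_nhdsWithin
    obtain ⟨q, hq1, hq2⟩ := Filter.nonempty_of_mem (Filter.inter_mem h1 h2)
    exact ⟨q, hq2, Metric.mem_ball.mp hq1⟩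
  choose q hqne hqd using hq
  -- decreasing chain
  have hmono : ∀ m n : ℕ, m ≤ n → A n ⊆ A m := by
    intro m n h
    induction h with
    | refl => exact subset_rfl
    | step _ ih => exact (hdec _).trans ih
  -- the sequence x
  set x : Ψ → X := fun s => if h : ∃ n, s ∉ A n then q (Nat.find h - 1) else p with hx
  -- value on the ring A m \ A (m+1)
  have hxval : ∀ m : ℕ, ∀ s ∈ A m \ A (m + 1), x s = q m := by
    intro m s hs
    have h : ∃ n, s ∉ A n := ⟨m + 1, hs.2⟩
    have hfind : Nat.find h = m + 1 := by
      rw [Nat.find_eq_iff]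
      exact ⟨hs.2, fun k hk => not_not_intro (hmono k m (Nat.lt_succ_iff.mp hk) hs.1)⟩
    simp only [hx, dif_pos h, hfind, Nat.add_sub_cancel]
  -- each q n is a rho-limit point
  have hqΛ : ∀ n : ℕ, IsRhoLimitPoint F ρ x (q n) := by
    intro n
    obtain ⟨E, hE, hEs⟩ := my_not_mem_genIdeal.mp (hdiffpos n)
    refine ⟨E, hE, fun U hU => ⟨∅, finite_empty, ?_⟩⟩
    intro s hs
    rw [diff_empty] at hs
    rw [hxval n s (hEs hs)]
    exact mem_of_mem_nhds hU
  -- p is in the closure of Λ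
  have hpcl : p ∈ closure {η | IsRhoLimitPoint F ρ x η} := by
    rw [Metric.mem_closure_iff]
    intro ε hε
    obtain ⟨n, hn⟩ := exists_nat_one_div_lt hε
    exact ⟨q n, hqΛ n, by rw [dist_comm]; exact lt_trans (hqd n) hn⟩
  have hpΛ : IsRhoLimitPoint F ρ x p := (hcl x).closure_subset hpcl
  obtain ⟨G, hG, hGp⟩ := hpΛ
  refine ⟨G, hG, ?_⟩
  intro n
  -- choose a radius excluding q 0, ..., q n
  have hr : ∃ r > 0, ∀ m ≤ n, r ≤ dist p (q m) := by
    refine ⟨((Finset.range (n + 1)).image fun m => dist p (q m)).min' (by simp), ?_, ?_⟩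
    · rw [gt_iff_lt, Finset.lt_min'_iff]
      intro y hy
      simp only [Finset.mem_image, Finset.mem_range] at hy
      obtain ⟨m, _, rfl⟩ := hy
      exact dist_pos.mpr (Ne.symm (hqne m))
    · intro m hm
      exact Finset.min'_le _ _ (Finset.mem_image_of_mem _ (Finset.mem_range.mpr (Nat.lt_succ_of_le hm)))
  obtain ⟨r, hrpos, hrle⟩ := hr
  obtain ⟨K, hKfin, hKs⟩ := hGp (Metric.ball p r) (Metric.ball_mem_nhds _ hrpos)
  refine ⟨K, hKfin, ?_⟩
  intro s hs
  have hxs : dist (x s) p < r := hKs s hs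
  by_cases h : ∃ k, s ∉ A k
  · have hxeq : x s = q (Nat.find h - 1) := by simp only [hx, dif_pos h]
    by_cases hk : Nat.find h - 1 ≤ n
    · exfalso
      have := hrle _ hk
      rw [hxeq, dist_comm] at hxs
      linarith
    · push_neg at hk
      have hfind : n < Nat.find h := lt_of_lt_of_le hk (Nat.sub_le _ _)
      exact not_not.mp (Nat.find_min h hfind)
  · push_neg at h
    exact h n

theorem pbar_iff_lambda_closed
    [Countable Ω] [Infinite Ω] [Countable Ψ] [Infinite Ψ]
    [MetricSpace X] (hacc : ∃ p : X, (𝓝[≠] p).NeBot)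
    (F : Set (Set Ω)) (ρ : Set Ω → Set Ψ) (hpr : IsPartitionRegular F ρ) :
    IsPbar F ρ ↔ ∀ x : Ψ → X, IsClosed {η | IsRhoLimitPoint F ρ x η} :=
  ⟨fun hP x => my_pbar_closed hpr hP x, fun hcl => my_closed_pbar hacc hpr hcl⟩
end

section
/- Let X be a locally compact metric space with an accumulation point and let ρ : F → [Ψ]^ω be a partition regular function. Then ρ is P⁻ if and only if for every sequence x : Ψ → X, each isolated point of Γ_x(ρ) belongs to Λ_x(ρ). -/
open Set Filter Topology

variable {Ω Ψ X : Type*}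

/-- Finite Ramsey property: partition regularity extends to finite covers. -/
lemma IsPartitionRegular.ramsey_finset {F : Set (Set Ω)} {ρ : Set Ω → Set Ψ}
    (hpr : IsPartitionRegular F ρ) {ι : Type*} (t : Finset ι) (C : ι → Set Ψ) :
    ∀ G ∈ F, ρ G ⊆ ⋃ i ∈ t, C i → ∃ E ∈ F, ∃ i ∈ t, ρ E ⊆ C i := by
  classical
  induction t using Finset.induction with
  | empty =>
    intro G hG h
    obtain ⟨a, ha⟩ := (hpr.image_infinite G hG).nonempty
    simpa using h ha
  | @insert a s ha ih =>
    intro G hG h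
    obtain ⟨E, hE, hcase⟩ := hpr.ramsey G hG (ρ G ∩ C a) (ρ G \ C a)
      (by rw [Set.inter_union_diff])
    rcases hcase with h1 | h2
    · exact ⟨E, hE, a, Finset.mem_insert_self a s, fun z hz => (h1 hz).2⟩
    · obtain ⟨E', hE', i, hi, hsub⟩ := ih E hE (by
        intro z hz
        have hz1 := h (h2 hz).1
        simp only [Finset.mem_insert, Set.mem_iUnion] at hz1 ⊢
        obtain ⟨j, hj | hj, hzj⟩ := hz1
        · exact absurd (hj ▸ hzj) (h2 hz).2
        · exact ⟨j, hj, hzj⟩)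
      exact ⟨E', hE', i, Finset.mem_insert_of_mem hi, hsub⟩

/-- If some `ρ G` lands inside the preimage of a compact set, there is a
`ρ`-cluster point inside that compact set. -/
lemma cluster_in_compact [TopologicalSpace X] {F : Set (Set Ω)} {ρ : Set Ω → Set Ψ}
    (hpr : IsPartitionRegular F ρ) (x : Ψ → X) {Kc : Set X} (hK : IsCompact Kc)
    {G : Set Ω} (hG : G ∈ F) (hsub : ρ G ⊆ x ⁻¹' Kc) :
    ∃ q ∈ Kc, IsRhoClusterPoint F ρ x q := by
  by_contra hcon
  push_neg at hcon
  have hU : ∀ q ∈ Kc, ∃ U ∈ 𝓝 q, ∀ E ∈ F, ¬ ρ E ⊆ {s | x s ∈ U} := by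
    intro q hq
    have := hcon q hq
    unfold IsRhoClusterPoint at this
    push_neg at this
    obtain ⟨U, hU1, hU2⟩ := this
    exact ⟨U, hU1, fun E hE hsubE => (hU2 E hE hsubE).elim⟩
  choose U hU1 hU2 using hU
  obtain ⟨t, htcov⟩ := hK.elim_nhds_subcover' (fun q hq => U q hq) (fun q hq => hU1 q hq)
  obtain ⟨E, hE, i, hi, hEsub⟩ := hpr.ramsey_finset t
    (fun (q : Kc) => {s | x s ∈ U q.1 q.2}) G hG (by
      intro z hz
      have := htcov (hsub hz)
      simp only [Set.mem_iUnion] at this ⊢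
      obtain ⟨q, hq, hzq⟩ := this
      exact ⟨q, hq, hzq⟩)
  exact hU2 i.1 i.2 E hE hEsub

/-- An auxiliary sequence converging rapidly to an accumulation point. -/
lemma exists_rapid_seq [MetricSpace X] (p : X) (hp : (𝓝[≠] p).NeBot) :
    ∃ y : ℕ → X, (∀ n, y n ≠ p) ∧ (∀ n, dist (y (n + 1)) p < dist (y n) p / 2) := by
  have key : ∀ ε : ℝ, 0 < ε → ∃ z : X, z ≠ p ∧ dist z p < ε := by
    intro ε hε
    have hmem : Metric.ball p ε ∩ {p}ᶜ ∈ 𝓝[≠] p :=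
      Filter.inter_mem (nhdsWithin_le_nhds (Metric.ball_mem_nhds p hε)) self_mem_nhdsWithin
    obtain ⟨z, hz1, hz2⟩ := hp.nonempty_of_mem hmem
    exact ⟨z, hz2, Metric.mem_ball.1 hz1⟩
  choose f hf1 hf2 using key
  let Y : ℕ → {z : X // z ≠ p} := fun n => Nat.rec ⟨f 1 one_pos, hf1 1 one_pos⟩
    (fun _ z => ⟨f (dist z.1 p / 2) (by have := dist_pos.2 z.2; linarith),
      hf1 _ _⟩) n
  refine ⟨fun n => (Y n).1, fun n => (Y n).2, fun n => ?_⟩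
  exact hf2 (dist (Y n).1 p / 2) _

theorem pminus_iff_isolated_gamma_in_lambda
    [Countable Ω] [Infinite Ω] [Countable Ψ] [Infinite Ψ]
    [MetricSpace X] [LocallyCompactSpace X] (hacc : ∃ p : X, (𝓝[≠] p).NeBot)
    (F : Set (Set Ω)) (ρ : Set Ω → Set Ψ) (hpr : IsPartitionRegular F ρ) :
    IsPminus F ρ ↔
      ∀ x : Ψ → X, ∀ p : X,
        (p ∈ {η | IsRhoClusterPoint F ρ x η} ∧
          ∃ U ∈ 𝓝 p, U ∩ {η | IsRhoClusterPoint F ρ x η} = {p}) →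
        p ∈ {η | IsRhoLimitPoint F ρ x η} := by
  constructor
  · -- P⁻ implies every isolated cluster point is a limit point
    rintro hP x p ⟨hpΓ, U, hUnhds, hUiso⟩
    obtain ⟨S, hSnhds, hSU, hSc⟩ := LocallyCompactSpace.local_compact_nhds p U hUnhds
    obtain ⟨ε, hε, hball⟩ := Metric.mem_nhds_iff.1 hSnhds
    set r : ℕ → ℝ := fun n => ε / 2 / 2 ^ n with hr
    have hrpos : ∀ n, 0 < r n := fun n => by simp only [hr]; positivity
    have hrstep : ∀ n, r (n + 1) = r n / 2 := by
      intro n; simp only [hr, pow_succ]; ring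
    have hrle : ∀ n, r n ≤ ε / 2 := by
      intro n
      simp only [hr]
      exact div_le_self (by positivity) (one_le_pow₀ (by norm_num))
    have hcb : ∀ n, Metric.closedBall p (r n) ⊆ S := by
      intro n
      exact (Metric.closedBall_subset_ball (lt_of_le_of_lt (hrle n) (by linarith))).trans hball
    set A : ℕ → Set Ψ := fun n => x ⁻¹' Metric.closedBall p (r n) with hA
    have hdec : ∀ n, A (n + 1) ⊆ A n := by
      intro n s hs
      exact Metric.closedBall_subset_closedBall (by rw [hrstep]; linarith [hrpos n]) hs
    have hnotin : ∀ n, A n ∉ genIdeal F ρ := by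
      intro n hmem
      simp only [genIdeal, Set.mem_setOf_eq] at hmem
      obtain ⟨G, hG, hGsub⟩ := hpΓ (Metric.ball p (r n)) (Metric.ball_mem_nhds p (hrpos n))
      exact hmem G hG (fun z hz => Metric.ball_subset_closedBall (hGsub hz))
    have hsmall : ∀ n, A n \ A (n + 1) ∈ genIdeal F ρ := by
      intro n
      simp only [genIdeal, Set.mem_setOf_eq]
      intro G hG hGsub
      have hKc : IsCompact (Metric.closedBall p (r n) ∩ (Metric.ball p (r (n + 1)))ᶜ) :=
        (hSc.of_isClosed_subset Metric.isClosed_closedBall (hcb n)).inter_right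
          Metric.isOpen_ball.isClosed_compl
      have hsub2 : ρ G ⊆ x ⁻¹' (Metric.closedBall p (r n) ∩ (Metric.ball p (r (n + 1)))ᶜ) := by
        intro z hz
        obtain ⟨h1, h2⟩ := hGsub hz
        exact ⟨h1, fun hb => h2 (Metric.ball_subset_closedBall hb)⟩
      obtain ⟨q, hq, hqcl⟩ := cluster_in_compact hpr x hKc hG hsub2
      have hqp : q = p := by
        have hqU : q ∈ U := hSU (hcb n hq.1)
        have : q ∈ U ∩ {η | IsRhoClusterPoint F ρ x η} := ⟨hqU, hqcl⟩
        rw [hUiso] at this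
        exact this
      have hq2 := hq.2
      rw [hqp] at hq2
      exact hq2 (Metric.mem_ball_self (hrpos (n + 1)))
    obtain ⟨G, hG, hRho⟩ := hP A hdec hnotin hsmall
    refine ⟨G, hG, fun V hV => ?_⟩
    obtain ⟨δ, hδ, hballV⟩ := Metric.mem_nhds_iff.1 hV
    obtain ⟨n, hn⟩ : ∃ n : ℕ, r n < δ := by
      obtain ⟨n, hn⟩ := pow_unbounded_of_one_lt (ε / 2 / δ) (by norm_num : (1:ℝ) < 2)
      refine ⟨n, ?_⟩
      have h2n : (0:ℝ) < 2 ^ n := by positivity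
      rw [div_lt_iff₀ hδ] at hn
      simp only [hr]
      rw [div_lt_iff₀ h2n]
      nlinarith
    obtain ⟨K, hKfin, hKsub⟩ := hRho n
    refine ⟨K, hKfin, fun s hs => ?_⟩
    have : x s ∈ Metric.closedBall p (r n) := hKsub hs
    exact hballV (Metric.mem_ball.2 (lt_of_le_of_lt (Metric.mem_closedBall.1 this) hn))
  · -- converse
    intro h A hdec hpos hsmall
    obtain ⟨p, hp⟩ := hacc
    obtain ⟨y, hyne, hdstep⟩ := exists_rapid_seq p hp
    classical
    have hdpos : ∀ n, 0 < dist (y n) p := fun n => dist_pos.2 (hyne n)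
    have hdmono : ∀ {m n : ℕ}, m ≤ n → dist (y n) p ≤ dist (y m) p := by
      intro m n hmn
      induction n, hmn using Nat.le_induction with
      | base => exact le_refl _
      | succ n hmn ih => linarith [hdstep n, hdpos n]
    have hdlt : ∀ {m n : ℕ}, m < n → dist (y n) p < dist (y m) p / 2 := by
      intro m n hmn
      have h1 : dist (y n) p ≤ dist (y (m + 1)) p := hdmono (Nat.succ_le_of_lt hmn)
      linarith [hdstep m]
    have hdbound : ∀ n, dist (y n) p ≤ dist (y 0) p / 2 ^ n := by
      intro n
      induction n with
      | zero => simp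
      | succ n ih =>
        have h1 := hdstep n
        have h2 : (0:ℝ) < 2 ^ n := by positivity
        have h3 : dist (y 0) p / 2 ^ n / 2 = dist (y 0) p / 2 ^ (n + 1) := by
          rw [pow_succ]; ring
        linarith
    have hsmallball : ∀ ε : ℝ, 0 < ε → ∃ N : ℕ, dist (y 0) p / 2 ^ N < ε := by
      intro ε hε
      obtain ⟨N, hN⟩ := pow_unbounded_of_one_lt (dist (y 0) p / ε) (by norm_num : (1:ℝ) < 2)
      refine ⟨N, ?_⟩
      have h2N : (0:ℝ) < 2 ^ N := by positivity
      rw [div_lt_iff₀ hε] at hN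
      rw [div_lt_iff₀ h2N]
      nlinarith
    have hAmono : ∀ {m n : ℕ}, m ≤ n → A n ⊆ A m := by
      intro m n hmn
      induction n, hmn using Nat.le_induction with
      | base => exact subset_rfl
      | succ n hmn ih => exact (hdec n).trans ih
    set x : Ψ → X := fun s =>
      if h : ∀ n, s ∈ A n then p
      else if s ∈ A 0 then y (Nat.find (not_forall.mp h)) else y 0 with hxdef
    have hx_cases : ∀ s : Ψ,
        (x s = p ∧ ∀ n, s ∈ A n) ∨ (x s = y 0 ∧ s ∉ A 0) ∨
        (∃ m : ℕ, x s = y (m + 1) ∧ s ∈ A m ∧ s ∉ A (m + 1)) := by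
      intro s
      by_cases hall : ∀ n, s ∈ A n
      · exact Or.inl ⟨by simp [hxdef, hall], hall⟩
      · by_cases h0 : s ∈ A 0
        · refine Or.inr (Or.inr ?_)
          have hxval : x s = y (Nat.find (not_forall.mp hall)) := by
            simp [hxdef, hall, h0]
          have hfind := Nat.find_spec (not_forall.mp hall)
          have hfpos : Nat.find (not_forall.mp hall) ≠ 0 := by
            intro h'
            rw [h'] at hfind
            exact hfind h0
          obtain ⟨m, hm⟩ := Nat.exists_eq_succ_of_ne_zero hfpos
          refine ⟨m, by rw [hxval, hm], ?_, ?_⟩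
          · have := Nat.find_min (not_forall.mp hall) (by omega : m < Nat.find (not_forall.mp hall))
            exact not_not.mp this
          · rw [hm] at hfind
            exact hfind
        · exact Or.inr (Or.inl ⟨by simp [hxdef, hall, h0], h0⟩)
    have hrange : ∀ s, x s ∈ insert p (Set.range y) := by
      intro s
      rcases hx_cases s with ⟨h1, _⟩ | ⟨h1, _⟩ | ⟨m, h1, _, _⟩ <;> rw [h1]
      · exact Set.mem_insert _ _
      · exact Set.mem_insert_of_mem _ ⟨0, rfl⟩
      · exact Set.mem_insert_of_mem _ ⟨m + 1, rfl⟩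
    have hytend : Tendsto y atTop (𝓝 p) := by
      rw [Metric.tendsto_atTop]
      intro ε hε
      obtain ⟨N, hN⟩ := hsmallball ε hε
      refine ⟨N, fun n hn => ?_⟩
      have h1 : dist (y n) p ≤ dist (y 0) p / 2 ^ n := hdbound n
      have h2 : dist (y 0) p / 2 ^ n ≤ dist (y 0) p / 2 ^ N := by
        gcongr <;> first | exact (hdpos 0).le | norm_num | omega
      linarith
    have hC : IsClosed (insert p (Set.range y)) := hytend.isCompact_insert_range.isClosed
    have hΓp : IsRhoClusterPoint F ρ x p := by
      intro V hV
      obtain ⟨ε, hε, hball⟩ := Metric.mem_nhds_iff.1 hV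
      obtain ⟨N, hN⟩ := hsmallball ε hε
      have hclaim : ∀ s ∈ A N, x s ∈ Metric.ball p ε := by
        intro s hs
        rcases hx_cases s with ⟨h1, _⟩ | ⟨h1, h2⟩ | ⟨m, h1, hm1, hm2⟩
        · rw [h1]; exact Metric.mem_ball_self hε
        · exact absurd (hAmono (Nat.zero_le N) hs) h2
        · rw [h1]
          have hNm : N ≤ m + 1 := by
            by_contra hcon
            push_neg at hcon
            exact hm2 (hAmono (by omega : m + 1 ≤ N) hs)
          have hb1 : dist (y (m + 1)) p ≤ dist (y 0) p / 2 ^ (m + 1) := hdbound (m + 1)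
          have hb2 : dist (y 0) p / 2 ^ (m + 1) ≤ dist (y 0) p / 2 ^ N := by
            gcongr <;> first | exact (hdpos 0).le | norm_num | omega
          exact Metric.mem_ball.2 (by linarith)
      have hposN := hpos N
      simp only [genIdeal, Set.mem_setOf_eq] at hposN
      push_neg at hposN
      obtain ⟨G, hG, hGsub⟩ := hposN
      exact ⟨G, hG, fun z hz => hball (hclaim z (hGsub hz))⟩
    have hΓsub : ∀ q, IsRhoClusterPoint F ρ x q → q = p ∨ q = y 0 := by
      intro q hq
      by_contra hne
      push_neg at hne
      obtain ⟨hne1, hne2⟩ := hne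
      by_cases hqC : q ∈ insert p (Set.range y)
      · rcases hqC with rfl | ⟨m, rfl⟩
        · exact hne1 rfl
        · have hm : m ≠ 0 := fun h0 => hne2 (by rw [h0])
          obtain ⟨k, rfl⟩ := Nat.exists_eq_succ_of_ne_zero hm
          obtain ⟨G, hG, hGsub⟩ := hq (Metric.ball (y (k + 1)) (dist (y (k + 1)) p / 2))
            (Metric.ball_mem_nhds _ (by linarith [hdpos (k + 1)]))
          refine hsmall k G hG (fun z hz => ?_)
          have hxz : dist (x z) (y (k + 1)) < dist (y (k + 1)) p / 2 :=
            Metric.mem_ball.1 (hGsub hz)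
          rcases hx_cases z with ⟨h1, hall⟩ | ⟨h1, h0⟩ | ⟨m', h1, hm1, hm2⟩
          · exfalso
            rw [h1] at hxz
            rw [dist_comm] at hxz
            linarith [hdpos (k + 1)]
          · exfalso
            rw [h1] at hxz
            have htri : dist (y 0) p ≤ dist (y 0) (y (k + 1)) + dist (y (k + 1)) p :=
              dist_triangle _ _ _
            have h2 : dist (y (k + 1)) p < dist (y 0) p / 2 := hdlt (Nat.succ_pos k)
            linarith [hdpos 0]
          · have hmm : m' = k := by
              by_contra hne'
              rcases Nat.lt_or_ge (m' + 1) (k + 1) with hlt | hge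
              · have hk := hdlt hlt
                have htri : dist (y (m' + 1)) p ≤
                    dist (y (m' + 1)) (y (k + 1)) + dist (y (k + 1)) p := dist_triangle _ _ _
                rw [h1] at hxz
                linarith [hdpos (m' + 1)]
              · have hlt' : k + 1 < m' + 1 := by omega
                have hk := hdlt hlt'
                have htri : dist (y (k + 1)) p ≤
                    dist (y (k + 1)) (y (m' + 1)) + dist (y (m' + 1)) p := dist_triangle _ _ _
                rw [h1] at hxz
                rw [dist_comm] at hxz
                linarith [hdpos (k + 1)]
            rw [hmm] at hm1 hm2
            exact ⟨hm1, hm2⟩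
      · obtain ⟨G, hG, hGsub⟩ := hq _ (hC.isOpen_compl.mem_nhds hqC)
        obtain ⟨a, haρ⟩ := (hpr.image_infinite G hG).nonempty
        exact (hGsub haρ) (hrange a)
    have hUiso : Metric.ball p (dist (y 0) p) ∩ {η | IsRhoClusterPoint F ρ x η} = {p} := by
      ext q
      constructor
      · rintro ⟨hq1, hq2⟩
        rcases hΓsub q hq2 with rfl | rfl
        · rfl
        · exact absurd (Metric.mem_ball.1 hq1) (lt_irrefl _)
      · rintro rfl
        exact ⟨Metric.mem_ball_self (hdpos 0), hΓp⟩
    obtain ⟨G, hG, hlim⟩ := h x p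
      ⟨hΓp, Metric.ball p (dist (y 0) p), Metric.ball_mem_nhds p (hdpos 0), hUiso⟩
    refine ⟨G, hG, fun n => ?_⟩
    obtain ⟨K, hKfin, hKx⟩ := hlim (Metric.ball p (dist (y n) p)) (Metric.ball_mem_nhds p (hdpos n))
    refine ⟨K, hKfin, fun s hs => ?_⟩
    have hxs := hKx s hs
    rcases hx_cases s with ⟨h1, hall⟩ | ⟨h1, h0⟩ | ⟨m, h1, hm1, hm2⟩
    · exact hall n
    · exfalso
      rw [h1] at hxs
      have := Metric.mem_ball.1 hxs
      linarith [hdmono (Nat.zero_le n)]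
    · rw [h1] at hxs
      have hlt : dist (y (m + 1)) p < dist (y n) p := Metric.mem_ball.1 hxs
      have hnm : n ≤ m := by
        by_contra hcon
        push_neg at hcon
        exact absurd hlt (not_lt.2 (hdmono (by omega : m + 1 ≤ n)))
      exact hAmono hnm hm1
end

section
/- Let X be a metric space with an accumulation point. Then there exists a sequence x : [ω]² → X such that Λ_x(r) ≠ Γ_x(r). -/
open Set Filter Topology

/-- Elements of `[ω]²` (two-element subsets of `ω`), encoded as ordered pairs
`(i, j)` with `i < j`. -/
abbrev Pair : Type := {p : ℕ × ℕ // p.1 < p.2}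

/-- `[D]²`: the two-element subsets of `D`. -/
def pairsOf (D : Set ℕ) : Set Pair := {p | p.1.1 ∈ D ∧ p.1.2 ∈ D}

variable {X : Type*}

/-- `η` is an `r`-limit point of the sequence `x : [ω]² → X`. -/
def IsRLimitPoint [TopologicalSpace X] (x : Pair → X) (η : X) : Prop :=
  ∃ D : Set ℕ, D.Infinite ∧ ∀ U ∈ 𝓝 η, ∃ K : Set ℕ, K.Finite ∧
    ∀ p ∈ pairsOf (D \ K), x p ∈ U

/-- `η` is an `r`-cluster point of the sequence `x : [ω]² → X`. -/
def IsRClusterPoint [TopologicalSpace X] (x : Pair → X) (η : X) : Prop :=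
  ∀ U ∈ 𝓝 η, ∃ D : Set ℕ, D.Infinite ∧ pairsOf D ⊆ {p | x p ∈ U}

theorem exists_seq_lambda_r_ne_gamma_r
    [MetricSpace X] (hacc : ∃ p : X, (𝓝[≠] p).NeBot) :
    ∃ x : Pair → X, {η | IsRLimitPoint x η} ≠ {η | IsRClusterPoint x η} := by
  classical
  obtain ⟨p, hp⟩ := hacc
  -- choose a_n ≠ p with dist (a n) p < 1/(n+1)
  have key : ∀ n : ℕ, ∃ a : X, a ≠ p ∧ dist a p < 1 / (n + 1) := by
    intro n
    have hball : Metric.ball p (1 / (n + 1)) ∈ 𝓝 p :=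
      Metric.ball_mem_nhds p (by positivity)
    have hmem : Metric.ball p (1 / (n + 1)) ∩ {p}ᶜ ∈ 𝓝[≠] p :=
      Filter.inter_mem (mem_nhdsWithin_of_mem_nhds hball) self_mem_nhdsWithin
    obtain ⟨a, ha1, ha2⟩ := Filter.nonempty_of_mem hmem
    exact ⟨a, ha2, by simpa [Metric.mem_ball] using ha1⟩
  choose a hane hadist using key
  have hapos : ∀ n, 0 < dist (a n) p := fun n => dist_pos.mpr (hane n)
  set f : ℕ → ℕ := fun k => (Nat.unpair k).1 with hf
  set x : Pair → X := fun q => if f q.1.1 = f q.1.2 then a (f q.1.1) else a 0 with hx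
  have hfiber : ∀ n : ℕ, (f ⁻¹' {n}).Infinite := by
    intro n
    apply Set.infinite_of_injective_forall_mem (f := fun k : ℕ => Nat.pair n k)
    case hi => intro k l hkl; exact (Nat.pair_eq_pair.mp hkl).2
    case hf => intro k; simp [hf, Nat.unpair_pair]
  -- p is a cluster point
  have hclu : IsRClusterPoint x p := by
    intro U hU
    obtain ⟨ε, hε, hball⟩ := Metric.mem_nhds_iff.mp hU
    obtain ⟨n, hn⟩ := exists_nat_one_div_lt hε
    refine ⟨f ⁻¹' {n}, hfiber n, ?_⟩
    rintro ⟨⟨i, j⟩, hij⟩ ⟨hi, hj⟩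
    simp only [Set.mem_preimage, Set.mem_singleton_iff] at hi hj
    have : x ⟨(i, j), hij⟩ = a n := by simp [hx, hi, hj]
    refine Set.mem_setOf.mpr ?_
    rw [this]
    apply hball
    exact Metric.mem_ball.mpr (lt_trans (hadist n) hn)
  -- p is not a limit point
  have hnlim : ¬ IsRLimitPoint x p := by
    rintro ⟨D, hD, hlim⟩
    by_cases hcase : ∃ n, (D ∩ f ⁻¹' {n}).Infinite
    · obtain ⟨n, hn⟩ := hcase
      obtain ⟨K, hK, hKall⟩ := hlim (Metric.ball p (dist (a n) p))
        (Metric.ball_mem_nhds p (hapos n))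
      have hS : ((D ∩ f ⁻¹' {n}) \ K).Infinite := hn.diff hK
      obtain ⟨i, hi⟩ := hS.nonempty
      obtain ⟨j, hj, hij⟩ := hS.exists_gt i
      have hxq : x ⟨(i, j), hij⟩ = a n := by
        have h1 : f i = n := hi.1.2
        have h2 : f j = n := hj.1.2
        simp [hx, h1, h2]
      have hmem : (⟨(i, j), hij⟩ : Pair) ∈ pairsOf (D \ K) :=
        ⟨⟨hi.1.1, hi.2⟩, ⟨hj.1.1, hj.2⟩⟩
      have := hKall _ hmem
      rw [hxq] at this
      exact lt_irrefl _ (Metric.mem_ball.mp this)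
    · push_neg at hcase
      obtain ⟨K, hK, hKall⟩ := hlim (Metric.ball p (dist (a 0) p))
        (Metric.ball_mem_nhds p (hapos 0))
      have hS : (D \ K).Infinite := hD.diff hK
      obtain ⟨i, hi⟩ := hS.nonempty
      have hT : ((D \ K) \ (D ∩ f ⁻¹' {f i})).Infinite := hS.diff (hcase (f i))
      obtain ⟨j, hj, hij⟩ := hT.exists_gt i
      have hfj : f j ≠ f i := by
        intro h
        exact hj.2 ⟨hj.1.1, by simp [h]⟩
      have hxq : x ⟨(i, j), hij⟩ = a 0 := by
        simp [hx, Ne.symm hfj]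
      have hmem : (⟨(i, j), hij⟩ : Pair) ∈ pairsOf (D \ K) := ⟨hi, hj.1⟩
      have := hKall _ hmem
      rw [hxq] at this
      exact lt_irrefl _ (Metric.mem_ball.mp this)
  refine ⟨x, fun h => ?_⟩
  have hp2 : p ∈ {η | IsRClusterPoint x η} := hclu
  rw [← h] at hp2
  exact hnlim hp2
end

section
/- Let X be a metric space with an accumulation point. Then there exists a sequence x : [ω]² → X such that Λ_x(r) is not a closed subset of X. -/
open Set Filter Topology

variable {X : Type*}

theorem exists_seq_lambda_r_not_closed
    [MetricSpace X] (hacc : ∃ p : X, (𝓝[≠] p).NeBot) :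
    ∃ x : Pair → X, ¬ IsClosed {η | IsRLimitPoint x η} := by
  obtain ⟨p, hp⟩ := hacc
  -- choose points u n ≠ p with dist (u n) p < 1/(n+1)
  have hu : ∀ n : ℕ, ∃ q : X, q ≠ p ∧ dist q p < 1 / (n + 1) := by
    intro n
    have hpos : (0 : ℝ) < 1 / (n + 1) := by positivity
    have hmem : (Metric.ball p (1 / (n + 1)) ∩ {p}ᶜ) ∈ 𝓝[≠] p :=
      Filter.inter_mem (mem_nhdsWithin_of_mem_nhds (Metric.ball_mem_nhds p hpos))
        self_mem_nhdsWithin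
    obtain ⟨q, hq1, hq2⟩ := hp.nonempty_of_mem hmem
    exact ⟨q, hq2, Metric.mem_ball.mp hq1⟩
  choose u hune hudist using hu
  set b : ℕ → ℕ := fun m => (Nat.unpair m).1 with hb
  have hfib : ∀ n : ℕ, {m : ℕ | b m = n}.Infinite := by
    intro n
    refine Set.infinite_of_injective_forall_mem (f := fun k => Nat.pair n k) ?_ ?_
    · intro a a' h
      simpa using congrArg (fun m => (Nat.unpair m).2) h
    · intro k
      simp [hb]
  refine ⟨fun q => if b q.1.1 = b q.1.2 then u (b q.1.1) else u 0, fun hclosed => ?_⟩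
  set x : Pair → X := fun q => if b q.1.1 = b q.1.2 then u (b q.1.1) else u 0 with hx
  -- each u n is an r-limit point
  have hlim : ∀ n : ℕ, IsRLimitPoint x (u n) := by
    intro n
    refine ⟨{m : ℕ | b m = n}, hfib n, fun U hU => ⟨∅, Set.finite_empty, ?_⟩⟩
    rintro ⟨⟨i, j⟩, hij⟩ ⟨⟨hi, -⟩, ⟨hj, -⟩⟩
    have : x ⟨(i, j), hij⟩ = u n := by
      simp only [hx]
      rw [show b i = n from hi, show b j = n from hj]
      simp
    rw [this]
    exact mem_of_mem_nhds hU
  -- p is in the closure of the limit set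
  have hpcl : p ∈ closure {η | IsRLimitPoint x η} := by
    rw [Metric.mem_closure_iff]
    intro ε hε
    obtain ⟨n, hn⟩ := exists_nat_one_div_lt hε
    refine ⟨u n, hlim n, ?_⟩
    rw [dist_comm]
    exact (hudist n).trans hn
  -- but p is not an r-limit point
  have hpnot : ¬ IsRLimitPoint x p := by
    rintro ⟨D, hD, h⟩
    by_cases hcase : ∃ n, {m ∈ D | b m = n}.Infinite
    · obtain ⟨n, hn⟩ := hcase
      have hεpos : 0 < dist (u n) p := dist_pos.mpr (hune n)
      obtain ⟨K, hK, hKmem⟩ := h (Metric.ball p (dist (u n) p))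
        (Metric.ball_mem_nhds p hεpos)
      have hSinf : ({m ∈ D | b m = n} \ K).Infinite := hn.diff hK
      obtain ⟨i, hi⟩ := hSinf.nonempty
      obtain ⟨j, hj, hij⟩ := hSinf.exists_gt i
      have hmem : (⟨(i, j), hij⟩ : Pair) ∈ pairsOf (D \ K) :=
        ⟨⟨hi.1.1, hi.2⟩, ⟨hj.1.1, hj.2⟩⟩
      have := hKmem _ hmem
      have hxval : x ⟨(i, j), hij⟩ = u n := by
        simp only [hx]
        rw [show b i = n from hi.1.2, show b j = n from hj.1.2]
        simp
      rw [hxval, Metric.mem_ball] at this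
      exact lt_irrefl _ this
    · push_neg at hcase
      have himg : (b '' D).Infinite := by
        intro hfin
        have : D.Finite := by
          have hsub : D ⊆ ⋃ n ∈ b '' D, {m ∈ D | b m = n} := by
            intro m hm
            exact Set.mem_biUnion ⟨m, hm, rfl⟩ ⟨hm, rfl⟩
          exact (hfin.biUnion fun n _ => hcase n).subset hsub
        exact hD this
      have hεpos : 0 < dist (u 0) p := dist_pos.mpr (hune 0)
      obtain ⟨K, hK, hKmem⟩ := h (Metric.ball p (dist (u 0) p))
        (Metric.ball_mem_nhds p hεpos)
      have himg2 : (b '' (D \ K)).Infinite := by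
        intro hfin
        apply himg
        have hsub : b '' D ⊆ b '' (D \ K) ∪ b '' (D ∩ K) := by
          rintro a ⟨m, hm, rfl⟩
          by_cases hmK : m ∈ K
          · exact Or.inr ⟨m, ⟨hm, hmK⟩, rfl⟩
          · exact Or.inl ⟨m, ⟨hm, hmK⟩, rfl⟩
        exact (hfin.union ((hK.inter_of_right D).image b)).subset hsub
      -- find two elements of D \ K with distinct b-values
      obtain ⟨a, ha⟩ := himg2.nonempty
      obtain ⟨a', ha', haa'⟩ := himg2.exists_gt a
      obtain ⟨i, hi, rfl⟩ := ha
      obtain ⟨j, hj, rfl⟩ := ha'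
      have hbne : b i ≠ b j := fun hh => lt_irrefl _ (hh ▸ haa')
      have key : ∀ (i j : ℕ) (hij : i < j), i ∈ D \ K → j ∈ D \ K → b i ≠ b j → False := by
        intro i j hij hi hj hbne
        have hmem : (⟨(i, j), hij⟩ : Pair) ∈ pairsOf (D \ K) := ⟨hi, hj⟩
        have := hKmem _ hmem
        have hxval : x ⟨(i, j), hij⟩ = u 0 := by
          simp only [hx, if_neg hbne]
        rw [hxval, Metric.mem_ball] at this
        exact lt_irrefl _ this
      rcases lt_trichotomy i j with hlt | heq | hgt
      · exact key i j hlt hi hj hbne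
      · exact hbne (by rw [heq])
      · exact key j i hgt hj hi (Ne.symm hbne)
  exact hpnot (hclosed.closure_subset hpcl)
end

section
/- Let X be a locally compact metric space with an accumulation point. Then for every sequence x : [ω]² → X, each isolated point of Γ_x(r) belongs to Λ_x(r). -/
open Set Filter Topology

variable {X : Type*}

/-- Pigeonhole: an infinite subset of `ℕ` has an infinite fiber under a map to a
finite type. -/
lemma infinite_fiber_aux {ι : Type*} [Finite ι] {S : Set ℕ} (hS : S.Infinite)
    (f : ℕ → ι) : ∃ i, {n ∈ S | f n = i}.Infinite := by
  by_contra h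
  push_neg at h
  have : S ⊆ ⋃ i, {n ∈ S | f n = i} := by
    intro n hn
    exact Set.mem_iUnion.2 ⟨f n, hn, rfl⟩
  exact hS ((Set.finite_iUnion h).subset this)

/-- Infinite Ramsey theorem for pairs, with colors in a finite type. -/
lemma ramsey_pairs {ι : Type*} [Finite ι] [Nonempty ι] (c : ℕ → ℕ → ι)
    {E : Set ℕ} (hE : E.Infinite) :
    ∃ F, F ⊆ E ∧ F.Infinite ∧ ∃ i, ∀ u ∈ F, ∀ v ∈ F, u < v → c u v = i := by
  classical
  -- one step of the pre-homogeneous construction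
  have step : ∀ S : Set ℕ, S.Infinite → ∃ (a : ℕ) (S' : Set ℕ) (i : ι),
      a ∈ S ∧ S' ⊆ S ∧ S'.Infinite ∧ (∀ b ∈ S', a < b) ∧ (∀ b ∈ S', c a b = i) := by
    intro S hS
    obtain ⟨a, ha⟩ := hS.nonempty
    have hS'' : (S \ Set.Iic a).Infinite := hS.diff (Set.finite_Iic a)
    obtain ⟨i, hi⟩ := infinite_fiber_aux hS'' (c a)
    refine ⟨a, {n ∈ S \ Set.Iic a | c a n = i}, i, ha, ?_, hi, ?_, ?_⟩
    · intro b hb; exact hb.1.1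
    · intro b hb; exact lt_of_not_ge fun h => hb.1.2 h
    · intro b hb; exact hb.2
  choose! a S' col ha hsub hinf hgt hcol using step
  -- iterate
  let T : ℕ → Set ℕ := fun n => Nat.rec E (fun _ S => S' S) n
  have hT0 : T 0 = E := rfl
  have hTs : ∀ n, T (n + 1) = S' (T n) := fun n => rfl
  have hTinf : ∀ n, (T n).Infinite := by
    intro n; induction n with
    | zero => exact hE
    | succ n ih => rw [hTs]; exact hinf _ ih
  have hTsub : ∀ n, T (n + 1) ⊆ T n := fun n => hsub _ (hTinf n)
  have hTmono : ∀ n m, n ≤ m → T m ⊆ T n := by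
    intro n m hnm
    induction m with
    | zero => cases Nat.le_zero.1 hnm; exact fun _ h => h
    | succ m ih =>
      rcases Nat.lt_or_ge n (m + 1) with h | h
      · exact (ih (Nat.lt_succ_iff.1 h)).trans' (hTsub m)
      · have : n = m + 1 := le_antisymm hnm h
        subst this; exact fun _ h => h
  set A : ℕ → ℕ := fun n => a (T n) with hA
  have hAmem : ∀ n, A n ∈ T n := fun n => ha _ (hTinf n)
  have hAmono : StrictMono A := by
    apply strictMono_nat_of_lt_succ
    intro n
    have : A (n + 1) ∈ T (n + 1) := hAmem (n + 1)
    exact hgt _ (hTinf n) _ (by rw [hTs] at this; exact this)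
  have hAc : ∀ n m, n < m → c (A n) (A m) = col (T n) := by
    intro n m hnm
    have : A m ∈ T (n + 1) := hTmono (n + 1) m hnm (hAmem m)
    exact hcol _ (hTinf n) _ (by rw [hTs] at this; exact this)
  -- pigeonhole on the colors
  obtain ⟨i, hI⟩ := infinite_fiber_aux (Set.infinite_univ (α := ℕ))
    (fun n => col (T n))
  refine ⟨A '' {n ∈ Set.univ | col (T n) = i}, ?_, ?_, i, ?_⟩
  · rintro _ ⟨n, _, rfl⟩
    exact hTmono 0 n (Nat.zero_le n) (hAmem n)
  · exact hI.image (hAmono.injective.injOn)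
  · rintro _ ⟨n, hn, rfl⟩ _ ⟨m, hm, rfl⟩ huv
    have hnm : n < m := hAmono.lt_iff_lt.1 huv
    rw [hAc n m hnm]; exact hn.2

lemma pairsOf_mono {D E : Set ℕ} (h : D ⊆ E) : pairsOf D ⊆ pairsOf E :=
  fun _ hp => ⟨h hp.1, h hp.2⟩

lemma pair_eta (q : Pair) : (⟨(q.1.1, q.1.2), q.2⟩ : Pair) = q := by
  apply Subtype.ext; rfl

/-- A compact set containing all values of `x` on pairs of an infinite set
contains an `r`-cluster point. -/
lemma compact_exists_cluster [MetricSpace X] (x : Pair → X) {C : Set X}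
    (hC : IsCompact C) {E : Set ℕ} (hE : E.Infinite)
    (hx : ∀ q ∈ pairsOf E, x q ∈ C) : ∃ q ∈ C, IsRClusterPoint x q := by
  classical
  by_contra hcon
  push_neg at hcon
  have hbad : ∀ q ∈ C, ∃ U ∈ 𝓝 q, ∀ D : Set ℕ, D.Infinite →
      ¬ pairsOf D ⊆ {p | x p ∈ U} := by
    intro q hq
    have := hcon q hq
    unfold IsRClusterPoint at this
    push_neg at this
    obtain ⟨U, hU, h2⟩ := this
    exact ⟨U, hU, h2⟩
  choose! U hU hbadU using hbad
  obtain ⟨t, htC, hcov⟩ := hC.elim_nhds_subcover U (fun q hq => hU q hq)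
  -- t is nonempty, since pairsOf E is nonempty
  obtain ⟨u, hu⟩ := hE.nonempty
  obtain ⟨v, hv, huv⟩ := hE.exists_gt u
  have hq0 : (⟨(u, v), huv⟩ : Pair) ∈ pairsOf E := ⟨hu, hv⟩
  have hne : Nonempty {q // q ∈ t} := by
    have := hcov (hx _ hq0)
    rw [Set.mem_iUnion₂] at this
    obtain ⟨q, hq, _⟩ := this
    exact ⟨⟨q, hq⟩⟩
  -- the coloring
  set c : ℕ → ℕ → {q // q ∈ t} := fun m n =>
    if h : ∃ i : {q // q ∈ t}, ∀ (hlt : m < n), x ⟨(m, n), hlt⟩ ∈ U i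
    then h.choose else Classical.arbitrary _ with hc
  have hcspec : ∀ q : Pair, q ∈ pairsOf E →
      x q ∈ U (c q.1.1 q.1.2) := by
    intro q hq
    have hex : ∃ i : {q' // q' ∈ t}, ∀ (hlt : q.1.1 < q.1.2),
        x ⟨(q.1.1, q.1.2), hlt⟩ ∈ U i := by
      have := hcov (hx q hq)
      rw [Set.mem_iUnion₂] at this
      obtain ⟨w, hw, hxw⟩ := this
      exact ⟨⟨w, hw⟩, fun hlt => by rw [pair_eta]; exact hxw⟩
    have : c q.1.1 q.1.2 = hex.choose := dif_pos hex
    rw [this]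
    have := hex.choose_spec q.2
    rwa [pair_eta] at this
  obtain ⟨F, hFE, hFinf, i, hmono⟩ := ramsey_pairs c hE
  refine hbadU i.1 (htC i.1 i.2) F hFinf ?_
  intro q hq
  have hqE : q ∈ pairsOf E := pairsOf_mono hFE hq
  have := hcspec q hqE
  rwa [hmono _ hq.1 _ hq.2 q.2] at this

theorem isolated_gamma_r_mem_lambda_r
    [MetricSpace X] [LocallyCompactSpace X] (hacc : ∃ p : X, (𝓝[≠] p).NeBot)
    (x : Pair → X) (p : X)
    (hp : p ∈ {η | IsRClusterPoint x η} ∧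
      ∃ U ∈ 𝓝 p, U ∩ {η | IsRClusterPoint x η} = {p}) :
    p ∈ {η | IsRLimitPoint x η} := by
  classical
  obtain ⟨hpc, U, hU, hUiso⟩ := hp
  obtain ⟨K, hKnhds, hKsub, hKcomp⟩ := local_compact_nhds hU
  -- key step: shrink into small balls
  have key : ∀ E : Set ℕ, E.Infinite → pairsOf E ⊆ x ⁻¹' K → ∀ ε : ℝ, 0 < ε →
      ∃ F, F ⊆ E ∧ F.Infinite ∧ pairsOf F ⊆ x ⁻¹' (K ∩ Metric.ball p ε) := by
    intro E hE hEK ε hε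
    set c : ℕ → ℕ → Bool := fun m n =>
      if h : m < n then decide (x ⟨(m, n), h⟩ ∈ Metric.ball p ε) else false with hc
    obtain ⟨F, hFE, hFinf, i, hmono⟩ := ramsey_pairs c hE
    have hcq : ∀ q : Pair, c q.1.1 q.1.2 = decide (x q ∈ Metric.ball p ε) := by
      intro q
      have : c q.1.1 q.1.2 = decide (x ⟨(q.1.1, q.1.2), q.2⟩ ∈ Metric.ball p ε) :=
        dif_pos q.2
      rwa [pair_eta] at this
    cases i with
    | true =>
      refine ⟨F, hFE, hFinf, ?_⟩
      intro q hq
      have := hmono _ hq.1 _ hq.2 q.2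
      rw [hcq] at this
      exact ⟨hEK (pairsOf_mono hFE hq), of_decide_eq_true this⟩
    | false =>
      exfalso
      -- all pairs of F land in the compact set K \ ball p ε
      have hxF : ∀ q ∈ pairsOf F, x q ∈ K \ Metric.ball p ε := by
        intro q hq
        have hb := hmono _ hq.1 _ hq.2 q.2
        rw [hcq] at hb
        exact ⟨hEK (pairsOf_mono hFE hq), of_decide_eq_false hb⟩
      obtain ⟨q, hqC, hqcl⟩ := compact_exists_cluster x
        (hKcomp.diff Metric.isOpen_ball) hFinf hxF
      have : q ∈ U ∩ {η | IsRClusterPoint x η} := ⟨hKsub hqC.1, hqcl⟩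
      rw [hUiso] at this
      rw [this] at hqC
      exact hqC.2 (Metric.mem_ball_self hε)
  choose! Fn hFsub hFinf hFball using key
  obtain ⟨D0, hD0inf, hD0K⟩ := hpc K hKnhds
  -- iterate the key step
  let T : ℕ → Set ℕ := fun n => Nat.rec D0 (fun n E => Fn E (1 / (n + 1))) n
  have hTs : ∀ n, T (n + 1) = Fn (T n) (1 / (n + 1)) := fun n => rfl
  have hpos : ∀ n : ℕ, (0 : ℝ) < 1 / (n + 1) := by
    intro n; positivity
  have hTprop : ∀ n, (T n).Infinite ∧ pairsOf (T n) ⊆ x ⁻¹' K := by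
    intro n
    induction n with
    | zero => exact ⟨hD0inf, hD0K⟩
    | succ n ih =>
      rw [hTs]
      refine ⟨hFinf _ ih.1 ih.2 _ (hpos n), ?_⟩
      intro q hq
      exact (hFball _ ih.1 ih.2 _ (hpos n) hq).1
  have hTball : ∀ n, pairsOf (T (n + 1)) ⊆ x ⁻¹' (Metric.ball p (1 / (n + 1))) := by
    intro n q hq
    rw [hTs] at hq
    exact (hFball _ (hTprop n).1 (hTprop n).2 _ (hpos n) hq).2
  have hTsub : ∀ n, T (n + 1) ⊆ T n := by
    intro n
    rw [hTs]
    exact hFsub _ (hTprop n).1 (hTprop n).2 _ (hpos n)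
  have hTmono : ∀ n m, n ≤ m → T m ⊆ T n := by
    intro n m hnm
    induction m with
    | zero => cases Nat.le_zero.1 hnm; exact fun _ h => h
    | succ m ih =>
      rcases Nat.lt_or_ge n (m + 1) with h | h
      · exact (ih (Nat.lt_succ_iff.1 h)).trans' (hTsub m)
      · have : n = m + 1 := le_antisymm hnm h
        subst this; exact fun _ h => h
  -- diagonalize
  have hpick : ∀ n m : ℕ, ∃ b ∈ T n, m < b := fun n m => (hTprop n).1.exists_gt m
  choose b hb1 hb2 using hpick
  let A : ℕ → ℕ := fun n => Nat.rec (b 0 0) (fun n an => b (n + 1) an) n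
  have hAs : ∀ n, A (n + 1) = b (n + 1) (A n) := fun n => rfl
  have hAmem : ∀ n, A n ∈ T n := by
    intro n; cases n with
    | zero => exact hb1 0 0
    | succ n => exact hb1 (n + 1) (A n)
  have hAmono : StrictMono A := by
    apply strictMono_nat_of_lt_succ
    intro n; rw [hAs]; exact hb2 _ _
  refine ⟨Set.range A, Set.infinite_range_of_injective hAmono.injective, ?_⟩
  intro V hV
  obtain ⟨ε, hε, hball⟩ := Metric.mem_nhds_iff.1 hV
  obtain ⟨n, hn⟩ := exists_nat_one_div_lt hε
  refine ⟨Set.Iic (A n), Set.finite_Iic _, ?_⟩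
  rintro q ⟨⟨⟨j, hjq⟩, hj⟩, ⟨⟨k, hkq⟩, hk⟩⟩
  rw [← hjq] at hj
  rw [← hkq] at hk
  simp only [Set.mem_Iic, not_le] at hj hk
  have hjn : n < j := hAmono.lt_iff_lt.1 hj
  have hkn : n < k := hAmono.lt_iff_lt.1 hk
  have hq : q ∈ pairsOf (T (n + 1)) := by
    constructor
    · rw [← hjq]; exact hTmono (n + 1) j hjn (hAmem j)
    · rw [← hkq]; exact hTmono (n + 1) k hkn (hAmem k)
  have := hTball n hq
  apply hball
  exact Metric.ball_subset_ball hn.le this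
end

section
/- Let X be a metric space with an accumulation point. Then there exists a sequence x : ω → X such that Λ_x(FS) ≠ Γ_x(FS). -/
open Set Filter Topology

/-- `FS(D)`: the set of finite sums of distinct elements of `D`. -/
def FS (D : Set ℕ) : Set ℕ :=
  {n | ∃ α : Finset ℕ, ↑α ⊆ D ∧ α.Nonempty ∧ ∑ i ∈ α, i = n}

variable {X : Type*}

/-- `η` is an `FS`-limit point of the sequence `x : ω → X`. -/
def IsFSLimitPoint [TopologicalSpace X] (x : ℕ → X) (η : X) : Prop :=
  ∃ D : Set ℕ, D.Infinite ∧ ∀ U ∈ 𝓝 η, ∃ K : Set ℕ, K.Finite ∧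
    ∀ n ∈ FS (D \ K), x n ∈ U

/-- `η` is an `FS`-cluster point of the sequence `x : ω → X`. -/
def IsFSClusterPoint [TopologicalSpace X] (x : ℕ → X) (η : X) : Prop :=
  ∀ U ∈ 𝓝 η, ∃ D : Set ℕ, D.Infinite ∧ FS D ⊆ {n | x n ∈ U}

/-!
Split the binary digits of `n` into the columns `{j | (Nat.unpair j).1 = k}` and call `n ≠ 0`
of generation `k` when all its digits lie in column `k`. Given `z k → p` with `z k ≠ p`, let
`x n = z k` on generation `k` and `x n = q ≠ p` elsewhere. The powers `2 ^ j` with `j` in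
column `k` have all their finite sums in generation `k`, so `p` is an `FS`-cluster point.
If `FS(D \ K)` eventually avoided `q`, then all elements of `D \ K` would have to share one
generation `k` (a sum of two numbers of distinct generations has digits in both columns), and
then `x` would be constantly `z k ≠ p` on `D \ K`: so `p` is not an `FS`-limit point.
-/

lemma mem_FS_of_mem {D : Set ℕ} {d : ℕ} (hd : d ∈ D) : d ∈ FS D :=
  ⟨{d}, by simpa using hd, Finset.singleton_nonempty d, Finset.sum_singleton _ _⟩

lemma add_mem_FS {D : Set ℕ} {a b : ℕ} (ha : a ∈ D) (hb : b ∈ D) (hab : a ≠ b) :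
    a + b ∈ FS D :=
  ⟨{a, b}, by simp [Set.insert_subset_iff, ha, hb], Finset.insert_nonempty _ _,
    Finset.sum_pair hab⟩

namespace FSGeneration

def IsGeneration (k n : ℕ) : Prop :=
  ∃ s : Finset ℕ, s.Nonempty ∧ (∀ j ∈ s, (Nat.unpair j).1 = k) ∧ ∑ j ∈ s, 2 ^ j = n

lemma IsGeneration.unique {k l n : ℕ} (hk : IsGeneration k n) (hl : IsGeneration l n) :
    k = l := by
  obtain ⟨s, ⟨j, hj⟩, hsk, rfl⟩ := hk
  obtain ⟨t, -, htl, hst⟩ := hl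
  obtain rfl : t = s := Finset.geomSum_injective le_rfl hst
  exact (hsk j hj).symm.trans (htl j hj)

lemma not_isGeneration_add {k l m a b : ℕ} (ha : IsGeneration k a) (hb : IsGeneration l b)
    (hkl : k ≠ l) : ¬ IsGeneration m (a + b) := by
  obtain ⟨s, ⟨i, hi⟩, hsk, rfl⟩ := ha
  obtain ⟨t, ⟨j, hj⟩, htl, rfl⟩ := hb
  have hdisj : Disjoint s t := Finset.disjoint_left.2 fun j hjs hjt =>
    hkl ((hsk j hjs).symm.trans (htl j hjt))
  rintro ⟨u, -, hum, hsum⟩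
  rw [← Finset.sum_union hdisj] at hsum
  obtain rfl : u = s ∪ t := Finset.geomSum_injective le_rfl hsum
  have hmk : m = k := (hum i (Finset.mem_union_left _ hi)).symm.trans (hsk i hi)
  have hml : m = l := (hum j (Finset.mem_union_right _ hj)).symm.trans (htl j hj)
  exact hkl (hmk.symm.trans hml)

def column (k : ℕ) : Set ℕ := (2 ^ ·) '' {j | (Nat.unpair j).1 = k}

lemma column_infinite (k : ℕ) : (column k).Infinite := by
  refine Set.Infinite.image (Nat.pow_right_injective le_rfl).injOn ?_
  exact Set.infinite_of_injective_forall_mem (f := Nat.pair k)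
    (fun i j h => (Nat.pair_eq_pair.1 h).2) fun i => by simp

lemma isGeneration_of_mem_FS_column {k n : ℕ} (hn : n ∈ FS (column k)) :
    IsGeneration k n := by
  classical
  obtain ⟨α, hα, hne, rfl⟩ := hn
  obtain ⟨s, hs, rfl⟩ := Finset.subset_set_image_iff.1 hα
  refine ⟨s, Finset.image_nonempty.1 hne, fun j hj => hs hj, ?_⟩
  rw [Finset.sum_image fun i _ j _ h => Nat.pow_right_injective le_rfl h]

lemma IsGeneration.eq_of_forall_mem_FS {E : Set ℕ} (hE : ∀ n ∈ FS E, ∃ m, IsGeneration m n)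
    {k l a b : ℕ} (ha : a ∈ E) (hb : b ∈ E) (hka : IsGeneration k a) (hlb : IsGeneration l b) :
    k = l := by
  by_cases hab : a = b
  · subst hab
    exact hka.unique hlb
  by_contra hkl
  obtain ⟨m, hm⟩ := hE _ (add_mem_FS ha hb hab)
  exact not_isGeneration_add hka hlb hkl hm

open scoped Classical in
noncomputable def seq (q : X) (z : ℕ → X) (n : ℕ) : X :=
  if h : ∃ k, IsGeneration k n then z h.choose else q

lemma seq_of_isGeneration (q : X) (z : ℕ → X) {k n : ℕ} (h : IsGeneration k n) :
    seq q z n = z k := by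
  have hex : ∃ k, IsGeneration k n := ⟨k, h⟩
  rw [seq, dif_pos hex, hex.choose_spec.unique h]

lemma exists_isGeneration_of_seq_ne {q : X} {z : ℕ → X} {n : ℕ} (h : seq q z n ≠ q) :
    ∃ k, IsGeneration k n := by
  by_contra hn
  exact h (dif_neg hn)

section Topology

variable [TopologicalSpace X]

lemma isFSClusterPoint_seq (q : X) {z : ℕ → X} {p : X} (hp : p ∈ closure (range z)) :
    IsFSClusterPoint (seq q z) p := by
  intro U hU
  obtain ⟨-, hzU, k, rfl⟩ := mem_closure_iff_nhds.1 hp U hU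
  refine ⟨column k, column_infinite k, fun n hn => ?_⟩
  rw [mem_ofPred_eq, seq_of_isGeneration q z (isGeneration_of_mem_FS_column hn)]
  exact hzU

lemma not_isFSLimitPoint_seq [T1Space X] {q p : X} {z : ℕ → X} (hq : q ≠ p)
    (hz : ∀ k, z k ≠ p) : ¬ IsFSLimitPoint (seq q z) p := by
  rintro ⟨D, hD, hlim⟩
  obtain ⟨K, hK, hKq⟩ := hlim {q}ᶜ (compl_singleton_mem_nhds hq.symm)
  have hgen : ∀ n ∈ FS (D \ K), ∃ m, IsGeneration m n := fun n hn =>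
    exists_isGeneration_of_seq_ne (hKq n hn)
  obtain ⟨a, ha⟩ := (hD.sdiff hK).nonempty
  obtain ⟨k, hka⟩ := hgen a (mem_FS_of_mem ha)
  obtain ⟨K', hK', hK'z⟩ := hlim {z k}ᶜ (compl_singleton_mem_nhds (hz k).symm)
  obtain ⟨b, hbD, hbK⟩ := (hD.sdiff (hK.union hK')).nonempty
  have hb : b ∈ D \ K := ⟨hbD, fun h => hbK (Or.inl h)⟩
  have hb' : b ∈ D \ K' := ⟨hbD, fun h => hbK (Or.inr h)⟩
  obtain ⟨l, hlb⟩ := hgen b (mem_FS_of_mem hb)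
  obtain rfl : k = l := IsGeneration.eq_of_forall_mem_FS hgen ha hb hka hlb
  exact hK'z b (mem_FS_of_mem hb') (seq_of_isGeneration q z hlb)

end Topology

end FSGeneration

open FSGeneration in
theorem exists_seq_lambda_fs_ne_gamma_fs
    [MetricSpace X] (hacc : ∃ p : X, (𝓝[≠] p).NeBot) :
    ∃ x : ℕ → X, {η | IsFSLimitPoint x η} ≠ {η | IsFSClusterPoint x η} := by
  obtain ⟨p, hp⟩ := hacc
  obtain ⟨z, hz, hzp⟩ := mem_closure_iff_seq_limit.1 (mem_closure_iff_nhdsWithin_neBot.2 hp)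
  refine ⟨seq (z 0) z, fun h => ?_⟩
  have hcluster : p ∈ {η | IsFSClusterPoint (seq (z 0) z) η} :=
    isFSClusterPoint_seq (z 0) (mem_closure_of_tendsto hzp (.of_forall mem_range_self))
  exact not_isFSLimitPoint_seq (hz 0) hz (h.symm ▸ hcluster :)
end

section
/- Let X be a locally compact metric space with an accumulation point. Then for every sequence x : ω → X, each isolated point of Γ_x(FS) belongs to Λ_x(FS). -/
/-!
Let `C` be a compact neighbourhood of `p` inside a neighbourhood isolating `p` in `Γ_x(FS)`, and
`D` infinite with `x` mapping `FS(D)` into `C`. The sets `FS(D \ K)`, `K` finite, lie in a common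
idempotent ultrafilter `U`, which is then non-principal. By compactness `x` converges along `U` to
some `q ∈ C`. Along an idempotent non-principal ultrafilter, Hindman's construction run diagonally
over a countable neighbourhood basis of `q` shows that `q` is an FS-limit point, so `q ∈ Γ_x(FS)`,
and isolation forces `q = p`.
-/

open Set Filter Topology

variable {X : Type*}

attribute [local instance] Ultrafilter.add Ultrafilter.addSemigroup

theorem FS_mono {D₁ D₂ : Set ℕ} (h : D₁ ⊆ D₂) : FS D₁ ⊆ FS D₂ :=
  fun _ ⟨α, hα, hne, hsum⟩ => ⟨α, hα.trans h, hne, hsum⟩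

theorem FS_diff_Iic_subset_Ioi (D : Set ℕ) (n : ℕ) : FS (D \ Iic n) ⊆ Ioi n := by
  rintro _ ⟨α, hα, ⟨i, hi⟩, rfl⟩
  exact lt_of_lt_of_le (not_le.mp (hα hi).2) (Finset.single_le_sum (fun _ _ => Nat.zero_le _) hi)

theorem add_mem_FS_diff {D K : Set ℕ} {m m' : ℕ} (hm : m ∈ FS (D \ K))
    (hm' : m' ∈ FS (D \ (K ∪ Iic m))) : m + m' ∈ FS (D \ K) := by
  classical
  obtain ⟨α, hα, hαne, rfl⟩ := hm
  obtain ⟨β, hβ, -, rfl⟩ := hm'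
  -- the summands of `m'` exceed `m`, hence every summand of `m`
  have hdisj : Disjoint α β := Finset.disjoint_left.mpr fun i hiα hiβ =>
    (hβ hiβ).2 (Or.inr (Finset.single_le_sum (f := id) (fun _ _ => Nat.zero_le _) hiα))
  refine ⟨α ∪ β, ?_, hαne.mono Finset.subset_union_left, Finset.sum_union hdisj⟩
  rw [Finset.coe_union]
  exact union_subset hα fun i hi => ⟨(hβ hi).1, fun hK => (hβ hi).2 (Or.inl hK)⟩

theorem exists_idempotent_ultrafilter_le_atTop_inf_FS {D : Set ℕ} (hD : D.Infinite) :
    ∃ U : Ultrafilter ℕ, U + U = U ∧ ↑U ≤ atTop ⊓ 𝓟 (FS D) := by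
  let S : {K : Set ℕ // K.Finite} → Set (Ultrafilter ℕ) := fun K => {U | FS (D \ K) ∈ U}
  have hS_closed : IsClosed (⋂ K, S K) := isClosed_iInter fun _ => ultrafilter_isClosed_basic _
  have hS_nonempty : (⋂ K, S K).Nonempty := by
    refine IsCompact.nonempty_iInter_of_directed_nonempty_isCompact_isClosed S
      (fun K L => ⟨⟨K ∪ L, K.2.union L.2⟩, ?_, ?_⟩) (fun K => ?_)
      (fun _ => (ultrafilter_isClosed_basic _).isCompact) (fun _ => ultrafilter_isClosed_basic _)
    · exact fun U hU => mem_of_superset hU (FS_mono (sdiff_subset_sdiff_right subset_union_left))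
    · exact fun U hU => mem_of_superset hU (FS_mono (sdiff_subset_sdiff_right subset_union_right))
    · obtain ⟨d, hd⟩ := (hD.sdiff K.2).nonempty
      exact ⟨pure d, {d}, by simpa using hd, Finset.singleton_nonempty d,
        Finset.sum_singleton _ _⟩
  obtain ⟨U, hU, hUU⟩ := exists_idempotent_in_compact_add_subsemigroup
    Ultrafilter.continuous_add_left _ hS_nonempty hS_closed.isCompact fun U hU V hV => by
      simp only [mem_iInter] at hU hV ⊢
      intro K
      filter_upwards [hU K] with m hm
      filter_upwards [hV ⟨K ∪ Iic m, K.2.union (finite_Iic m)⟩] with m' hm'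
      exact add_mem_FS_diff hm hm'
  have hU_FS : ∀ K : Set ℕ, K.Finite → FS (D \ K) ∈ U := fun K hK => mem_iInter.mp hU ⟨K, hK⟩
  refine ⟨U, hUU, le_inf (fun s hs => ?_) (le_principal_iff.mpr ?_)⟩
  · obtain ⟨n, hn⟩ := mem_atTop_sets.mp hs
    exact mem_of_superset (hU_FS _ (finite_Iic n))
      ((FS_diff_Iic_subset_Ioi D n).trans fun i hi => hn i hi.le)
  · simpa using hU_FS ∅ finite_empty

theorem sum_mem_of_antitone_of_add_mem {A : ℕ → Set ℕ} {b : ℕ → ℕ} (hA : Antitone A)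
    (hb : ∀ n, b n ∈ A n) (hb_add : ∀ n, ∀ m ∈ A (n + 1), b n + m ∈ A n) {s : Finset ℕ}
    (hs : s.Nonempty) {k : ℕ} (hk : ∀ i ∈ s, k ≤ i) : ∑ i ∈ s, b i ∈ A k := by
  classical
  induction s using Finset.induction_on_min generalizing k with
  | empty => exact absurd hs Finset.not_nonempty_empty
  | insert a s has ih =>
    have hka : k ≤ a := hk a (Finset.mem_insert_self a s)
    rw [Finset.sum_insert fun ha => lt_irrefl a (has a ha)]
    refine hA hka ?_
    rcases s.eq_empty_or_nonempty with rfl | hs'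
    · simpa using hb a
    · exact hb_add a _ (ih hs' fun i hi => has i hi)

/-- A diagonal version of `Hindman.exists_FS_of_large` with a strictly increasing sequence. -/
theorem exists_strictMono_sum_mem_of_idempotent {U : Ultrafilter ℕ} (hU : U + U = U)
    (hU_atTop : (U : Filter ℕ) ≤ atTop) {t : ℕ → Set ℕ} (ht : ∀ k, t k ∈ U) :
    ∃ b : ℕ → ℕ, StrictMono b ∧ ∀ k (s : Finset ℕ), s.Nonempty → (∀ i ∈ s, k ≤ i) →
      ∑ i ∈ s, b i ∈ t k := by
  have hpick : ∀ A ∈ U, ∃ m ∈ A, ∀ᶠ m' in U, m + m' ∈ A := fun A hA =>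
    Ultrafilter.nonempty_of_mem (inter_mem hA (by rwa [← hU] at hA))
  choose! pick hpick_mem hpick_add using hpick
  let next : ℕ → Set ℕ → Set ℕ := fun n A =>
    A ∩ {m | pick A + m ∈ A} ∩ t (n + 1) ∩ Ioi (pick A)
  let A : ℕ → Set ℕ := fun n => Nat.rec (t 0) next n
  have hA_succ : ∀ n, A (n + 1) = next n (A n) := fun _ => rfl
  have hA_mem : ∀ n, A n ∈ U := by
    intro n
    induction n with
    | zero => exact ht 0
    | succ n ih =>
      exact inter_mem (inter_mem (inter_mem ih (hpick_add _ ih)) (ht _))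
        (hU_atTop (Ioi_mem_atTop _))
  have hA_sub : ∀ n, A n ⊆ t n := by
    rintro (_ | n)
    · exact subset_rfl
    · exact fun m hm => hm.1.2
  refine ⟨fun n => pick (A n), strictMono_nat_of_lt_succ fun n => (hpick_mem _ (hA_mem (n + 1))).2,
    fun k s hs hk => hA_sub k (sum_mem_of_antitone_of_add_mem ?_ (fun n => hpick_mem _ (hA_mem n))
      (fun n m hm => hm.1.1.2) hs hk)⟩
  exact antitone_nat_of_succ_le fun n m hm => hm.1.1.1

theorem exists_sum_eq_of_mem_FS_range_diff {b : ℕ → ℕ} (hb : Function.Injective b) {k n : ℕ}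
    (hn : n ∈ FS (range b \ b '' Iio k)) :
    ∃ s : Finset ℕ, s.Nonempty ∧ (∀ i ∈ s, k ≤ i) ∧ ∑ i ∈ s, b i = n := by
  obtain ⟨α, hα, hαne, rfl⟩ := hn
  refine ⟨α.preimage b hb.injOn, ?_, fun i hi => ?_, Finset.sum_preimage b α _ id fun v hv hv' =>
    absurd (hα hv).1 hv'⟩
  · obtain ⟨v, hv⟩ := hαne
    obtain ⟨i, rfl⟩ := (hα hv).1
    exact ⟨i, Finset.mem_preimage.mpr hv⟩
  · exact not_lt.mp fun hik => (hα (Finset.mem_preimage.mp hi)).2 ⟨i, hik, rfl⟩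

theorem exists_infinite_FS_diff_subset_of_idempotent {U : Ultrafilter ℕ} (hU : U + U = U)
    (hU_atTop : (U : Filter ℕ) ≤ atTop) {t : ℕ → Set ℕ} (ht : ∀ k, t k ∈ U) :
    ∃ D : Set ℕ, D.Infinite ∧ ∀ k, ∃ K : Set ℕ, K.Finite ∧ FS (D \ K) ⊆ t k := by
  obtain ⟨b, hb_mono, hb_sum⟩ := exists_strictMono_sum_mem_of_idempotent hU hU_atTop ht
  refine ⟨range b, infinite_range_of_injective hb_mono.injective,
    fun k => ⟨b '' Iio k, (finite_Iio k).image b, fun n hn => ?_⟩⟩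
  obtain ⟨s, hs, hsk, rfl⟩ := exists_sum_eq_of_mem_FS_range_diff hb_mono.injective hn
  exact hb_sum k s hs hsk

theorem IsFSLimitPoint.isFSClusterPoint [TopologicalSpace X] {x : ℕ → X} {η : X}
    (h : IsFSLimitPoint x η) : IsFSClusterPoint x η := by
  obtain ⟨D, hD, hDK⟩ := h
  intro V hV
  obtain ⟨K, hK, hKV⟩ := hDK V hV
  exact ⟨D \ K, hD.sdiff hK, hKV⟩

theorem isFSLimitPoint_of_tendsto_idempotent [TopologicalSpace X] [FirstCountableTopology X]
    {x : ℕ → X} {η : X} {U : Ultrafilter ℕ} (hU : U + U = U) (hU_atTop : (U : Filter ℕ) ≤ atTop)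
    (hx : Tendsto x (U : Filter ℕ) (𝓝 η)) : IsFSLimitPoint x η := by
  obtain ⟨V, hV⟩ := (𝓝 η).exists_antitone_basis
  obtain ⟨D, hD, hDK⟩ := exists_infinite_FS_diff_subset_of_idempotent hU hU_atTop
    fun k => hx (hV.mem k)
  refine ⟨D, hD, fun W hW => ?_⟩
  obtain ⟨k, -, hkW⟩ := hV.1.mem_iff.mp hW
  obtain ⟨K, hK, hKV⟩ := hDK k
  exact ⟨K, hK, fun n hn => hkW (hKV hn)⟩

theorem isolated_gamma_fs_mem_lambda_fs_general
    [MetricSpace X] [LocallyCompactSpace X]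
    (x : ℕ → X) (p : X)
    (hp : p ∈ {η | IsFSClusterPoint x η} ∧
      ∃ U ∈ 𝓝 p, U ∩ {η | IsFSClusterPoint x η} = {p}) :
    p ∈ {η | IsFSLimitPoint x η} := by
  obtain ⟨hp_cluster, U₀, hU₀, hU₀_iso⟩ := hp
  obtain ⟨C, hC, hCU₀, hC_compact⟩ := LocallyCompactSpace.local_compact_nhds p U₀ hU₀
  obtain ⟨D, hD, hDC⟩ := hp_cluster C hC
  obtain ⟨U, hU, hU_le⟩ := exists_idempotent_ultrafilter_le_atTop_inf_FS hD
  obtain ⟨q, hqC, hq⟩ := hC_compact.ultrafilter_le_nhds (U.map x) <|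
    le_principal_iff.mpr (mem_of_superset (le_principal_iff.mp (hU_le.trans inf_le_right)) hDC :)
  have hq_limit : IsFSLimitPoint x q :=
    isFSLimitPoint_of_tendsto_idempotent hU (hU_le.trans inf_le_left) hq
  have hqp : q = p := by
    have : q ∈ U₀ ∩ {η | IsFSClusterPoint x η} := ⟨hCU₀ hqC, hq_limit.isFSClusterPoint⟩
    rwa [hU₀_iso] at this
  exact hqp ▸ hq_limit

theorem isolated_gamma_fs_mem_lambda_fs
    [MetricSpace X] [LocallyCompactSpace X] (hacc : ∃ p : X, (𝓝[≠] p).NeBot)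
    (x : ℕ → X) (p : X)
    (hp : p ∈ {η | IsFSClusterPoint x η} ∧
      ∃ U ∈ 𝓝 p, U ∩ {η | IsFSClusterPoint x η} = {p}) :
    p ∈ {η | IsFSLimitPoint x η} :=
  isolated_gamma_fs_mem_lambda_fs_general x p hp
end

section
/- Let X be a Polish space and let ρ : F → [Ψ]^ω be a partition regular function. Identify subsets of Ω (respectively Ψ) with their characteristic functions in the product space 2^Ω (respectively 2^Ψ), so that [Ω]^ω and [Ψ]^ω are Polish spaces. If F is an analytic subset of [Ω]^ω and ρ is a Borel function, then for every sequence x : Ψ → X the set Λ_x(ρ) is an analytic subset of X. -/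
open Set Filter Topology

variable {Ω Ψ X : Type*}

/-- The characteristic function of a set, as an element of the Cantor-like
product space `α → Bool` (i.e. `2^α`). -/
noncomputable def chi {α : Type*} (A : Set α) : α → Bool :=
  fun i => @decide (i ∈ A) (Classical.dec _)

/-!
Write `chi '' F` as the range of a continuous map `f` from a Polish space `P`. For each finite
`K ⊆ Ω` and `s ∈ Ψ`, the condition `s ∈ ρ (f p \ K)` is Borel in `p`, because removing `K` is
continuous on `2^Ω` and keeps `F` invariant. Testing neighbourhoods of `η` only on a countable
basis, "`η` is a `ρ`-limit point witnessed by `f p`" becomes a countable Boolean combination of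
Borel conditions on `(p, η)`, so `Λ_x(ρ)` is the projection of a Borel subset of `P × X`.
-/

open MeasureTheory

section CharacteristicFunction

variable {α : Type*}

lemma chi_eq_true {A : Set α} {i : α} : chi A i = true ↔ i ∈ A := by
  simp [chi]

lemma setOf_chi (A : Set α) : {i | chi A i = true} = A :=
  ext fun _ => chi_eq_true

lemma continuous_chi_setOf_diff (K : Set α) :
    Continuous fun f : α → Bool => chi ({i | f i = true} \ K) := by
  refine continuous_pi fun i => ?_
  by_cases hi : i ∈ K
  · simpa [chi, hi] using continuous_const
  · simpa [chi, hi] using continuous_apply i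

end CharacteristicFunction

theorem analyticSet_setOf_exists_forall_nhds {P ι : Type*} [TopologicalSpace P] [PolishSpace P]
    [MeasurableSpace P] [BorelSpace P] [TopologicalSpace X] [PolishSpace X]
    [Countable ι] [Countable Ψ] (g : ι → P → Set Ψ) (hg : ∀ i s, MeasurableSet {p | s ∈ g i p})
    (x : Ψ → X) :
    AnalyticSet {η | ∃ p, ∀ U ∈ 𝓝 η, ∃ i, ∀ s ∈ g i p, x s ∈ U} := by
  let _ : MeasurableSpace X := borel X
  have _ : BorelSpace X := ⟨rfl⟩
  set B := TopologicalSpace.countableBasis X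
  have hB := TopologicalSpace.isBasis_countableBasis X
  set S : Set (P × X) := ⋂ b ∈ B,
    (univ ×ˢ bᶜ) ∪ ((⋃ i, ⋂ s, {p | s ∈ g i p → x s ∈ b}) ×ˢ univ)
  have hS : MeasurableSet S := by
    refine .biInter (TopologicalSpace.countable_countableBasis X) fun b hb => ?_
    refine (MeasurableSet.univ.prod (hB.isOpen hb).measurableSet.compl).union
      ((MeasurableSet.iUnion fun i => .iInter fun s => ?_).prod .univ)
    by_cases hs : x s ∈ b
    · simp [hs]
    · simp only [hs, imp_false]
      exact (hg i s).compl
  convert hS.analyticSet.image_of_continuous continuous_snd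
  ext η
  simp only [S, mem_ofPred_eq, mem_image, mem_iInter, mem_union, mem_prod, mem_univ,
    mem_compl_iff, mem_iUnion, true_and, and_true, Prod.exists,
    exists_eq_right]
  refine exists_congr fun p => ⟨fun h b hb => ?_, fun h U hU => ?_⟩
  · by_cases hη : η ∈ b
    · exact .inr (h b ((hB.isOpen hb).mem_nhds hη))
    · exact .inl hη
  · obtain ⟨b, hb, hηb, hbU⟩ := hB.mem_nhds_iff.1 hU
    obtain ⟨i, hi⟩ := (h b hb).resolve_left (not_not.2 hηb)
    exact ⟨i, fun s hs => hbU (hi s hs)⟩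

lemma measurableSet_setOf_mem_diff [Countable Ω] {P : Type*} [TopologicalSpace P]
    [MeasurableSpace P] [OpensMeasurableSpace P] {F : Set (Set Ω)} {ρ : Set Ω → Set Ψ}
    (hF : ∀ A ∈ F, ∀ K : Set Ω, K.Finite → A \ K ∈ F)
    (hρ : Measurable ((chi '' F).domRestrict fun f : Ω → Bool => chi (ρ {i | f i = true})))
    {f : P → Ω → Bool} (hf : Continuous f) (hfF : range f ⊆ chi '' F)
    {K : Set Ω} (hK : K.Finite) (s : Ψ) :
    MeasurableSet {p | s ∈ ρ ({i | f p i = true} \ K)} := by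
  have hmem : ∀ p, chi ({i | f p i = true} \ K) ∈ chi '' F := fun p => by
    obtain ⟨A, hA, hfA⟩ := hfF (mem_range_self p)
    exact ⟨A \ K, hF A hA K hK, by rw [← hfA, setOf_chi]⟩
  have hcont : Continuous fun p => (⟨_, hmem p⟩ : chi '' F) :=
    ((continuous_chi_setOf_diff K).comp hf).subtype_mk hmem
  have hmeas := (measurable_pi_apply s).comp (hρ.comp hcont.measurable)
  convert hmeas (measurableSet_singleton true) using 1
  ext p
  change s ∈ ρ _ ↔ chi (ρ {i | chi ({i | f p i = true} \ K) i = true}) s = true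
  rw [chi_eq_true, setOf_chi]

lemma isRhoLimitPoint_iff_of_range_eq {P : Type*} [TopologicalSpace X] {F : Set (Set Ω)}
    {ρ : Set Ω → Set Ψ} {x : Ψ → X} {f : P → Ω → Bool} (hf : range f = chi '' F) (η : X) :
    IsRhoLimitPoint F ρ x η ↔
      ∃ p, ∀ U ∈ 𝓝 η, ∃ K : Finset Ω, ∀ s ∈ ρ ({i | f p i = true} \ ↑K), x s ∈ U := by
  have hF : range (fun p => {i | f p i = true}) = F := by
    rw [range_comp' (fun g : Ω → Bool => {i | g i = true}) f, hf, image_image]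
    simp only [setOf_chi, image_id']
  rw [IsRhoLimitPoint, ← hF, exists_range_iff]
  simp only [exists_finite_iff_finset]

theorem lambda_rho_analytic_general
    [Countable Ω] [Countable Ψ]
    [TopologicalSpace X] [PolishSpace X]
    (F : Set (Set Ω)) (ρ : Set Ω → Set Ψ) (hpr : IsPartitionRegular F ρ)
    (hF : MeasureTheory.AnalyticSet (chi '' F))
    (hρ : Measurable ((chi '' F).restrict
      fun f : Ω → Bool => chi (ρ {i | f i = true})))
    (x : Ψ → X) :
    MeasureTheory.AnalyticSet {η | IsRhoLimitPoint F ρ x η} := by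
  obtain ⟨P, _, _, f, hf, hrange⟩ := analyticSet_iff_exists_polishSpace_range.1 hF
  let _ : MeasurableSpace P := borel P
  have _ : BorelSpace P := ⟨rfl⟩
  simp only [isRhoLimitPoint_iff_of_range_eq hrange]
  exact analyticSet_setOf_exists_forall_nhds (fun (K : Finset Ω) p => ρ ({i | f p i = true} \ ↑K))
    (fun K s => measurableSet_setOf_mem_diff hpr.diff_mem hρ hf hrange.subset K.finite_toSet s) x

theorem lambda_rho_analytic
    [Countable Ω] [Infinite Ω] [Countable Ψ] [Infinite Ψ]
    [TopologicalSpace X] [PolishSpace X]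
    (F : Set (Set Ω)) (ρ : Set Ω → Set Ψ) (hpr : IsPartitionRegular F ρ)
    (hF : MeasureTheory.AnalyticSet (chi '' F))
    (hρ : Measurable ((chi '' F).restrict
      fun f : Ω → Bool => chi (ρ {i | f i = true})))
    (x : Ψ → X) :
    MeasureTheory.AnalyticSet {η | IsRhoLimitPoint F ρ x η} :=
  lambda_rho_analytic_general F ρ hpr hF hρ x
end

section
/- Let X be a Polish space. Then for every sequence y : [ω]² → X, the set Λ_y(r) of r-limit points of y is an analytic subset of X. -/
open Set Filter Topology

variable {X : Type*}

/-!
Encode an infinite `D ⊆ ω` by its indicator `b : ℕ → Bool`. Testing the neighbourhoods of `η`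
only on a countable base of `X`, and cutting `D` by initial segments `[0, m)` instead of
arbitrary finite sets, the pairs `(b, η)` witnessing that `η` is an `r`-limit point form a
Borel subset of the Polish space `(ℕ → Bool) × X`. Its projection to `X` is `Λ_y(r)`, which is
therefore analytic.
-/

def EventuallyMapsTo (y : Pair → X) (D : Set ℕ) (U : Set X) : Prop :=
  ∃ m, ∀ p ∈ pairsOf D, m ≤ p.1.1 → y p ∈ U

lemma EventuallyMapsTo.mono {y : Pair → X} {D : Set ℕ} {U V : Set X} (hUV : U ⊆ V)
    (h : EventuallyMapsTo y D U) : EventuallyMapsTo y D V :=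
  let ⟨m, hm⟩ := h
  ⟨m, fun p hp hmp => hUV (hm p hp hmp)⟩

lemma exists_finite_forall_pairsOf_diff_iff (y : Pair → X) (D : Set ℕ) (U : Set X) :
    (∃ K : Set ℕ, K.Finite ∧ ∀ p ∈ pairsOf (D \ K), y p ∈ U) ↔ EventuallyMapsTo y D U := by
  constructor
  · rintro ⟨K, hK, hKU⟩
    obtain ⟨m, hm⟩ := hK.bddAbove
    refine ⟨m + 1, fun p ⟨h₁, h₂⟩ hmp => hKU p ⟨⟨h₁, fun hK₁ => ?_⟩, ⟨h₂, fun hK₂ => ?_⟩⟩⟩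
    · have := hm hK₁; omega
    · have := hm hK₂; have := p.2; omega
  · rintro ⟨m, hm⟩
    exact ⟨Iio m, finite_Iio m, fun p ⟨⟨h₁, h₁m⟩, ⟨h₂, _⟩⟩ => hm p ⟨h₁, h₂⟩ (not_lt.1 h₁m)⟩

lemma isRLimitPoint_iff_of_isTopologicalBasis [TopologicalSpace X] {B : Set (Set X)}
    (hB : TopologicalSpace.IsTopologicalBasis B) (y : Pair → X) (η : X) :
    IsRLimitPoint y η ↔
      ∃ D : Set ℕ, D.Infinite ∧ ∀ V ∈ B, η ∈ V → EventuallyMapsTo y D V := by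
  refine exists_congr fun D => and_congr_right fun _ => ?_
  simp only [exists_finite_forall_pairsOf_diff_iff]
  exact (hB.nhds_hasBasis.forall_iff fun _ _ hUV => EventuallyMapsTo.mono hUV).trans
    (by simp only [and_imp])

def rLimitWitnesses (y : Pair → X) (B : Set (Set X)) : Set ((ℕ → Bool) × X) :=
  {q | {i | q.1 i}.Infinite ∧ ∀ V ∈ B, q.2 ∈ V → EventuallyMapsTo y {i | q.1 i} V}

open scoped Classical in
lemma image_snd_rLimitWitnesses [TopologicalSpace X] {B : Set (Set X)}
    (hB : TopologicalSpace.IsTopologicalBasis B) (y : Pair → X) :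
    Prod.snd '' rLimitWitnesses y B = {η | IsRLimitPoint y η} := by
  ext η
  simp only [mem_image, mem_ofPred_eq, isRLimitPoint_iff_of_isTopologicalBasis hB]
  constructor
  · rintro ⟨⟨b, η⟩, hq, rfl⟩
    exact ⟨_, hq⟩
  · rintro ⟨D, hD⟩
    exact ⟨(fun i => decide (i ∈ D), η), by simpa [rLimitWitnesses] using hD, rfl⟩

lemma measurable_infinite_setOf_apply : Measurable fun b : ℕ → Bool => {i | b i}.Infinite := by
  simp only [infinite_iff_exists_gt, mem_ofPred_eq]
  fun_prop

lemma measurable_eventuallyMapsTo_setOf_apply (y : Pair → X) (U : Set X) :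
    Measurable fun b : ℕ → Bool => EventuallyMapsTo y {i | b i} U := by
  unfold EventuallyMapsTo pairsOf
  fun_prop

lemma measurableSet_rLimitWitnesses [TopologicalSpace X] [MeasurableSpace X]
    [OpensMeasurableSpace X] (y : Pair → X) {B : Set (Set X)} (hBc : B.Countable)
    (hBo : ∀ V ∈ B, IsOpen V) : MeasurableSet (rLimitWitnesses y B) := by
  have := hBc.to_subtype
  have hB : Measurable fun q : (ℕ → Bool) × X => ∀ V : B, q.2 ∈ (V : Set X) →
      EventuallyMapsTo y {i | q.1 i} V :=
    .forall fun V => ((measurable_mem.2 (hBo V V.2).measurableSet).comp measurable_snd).imp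
      ((measurable_eventuallyMapsTo_setOf_apply y V).comp measurable_fst)
  exact measurableSet_setOfPred.2 <| (measurable_infinite_setOf_apply.comp measurable_fst).and
    (by simpa only [Subtype.forall] using hB)

theorem lambda_r_analytic [TopologicalSpace X] [PolishSpace X] (y : Pair → X) :
    MeasureTheory.AnalyticSet {η | IsRLimitPoint y η} := by
  borelize X
  have : PolishSpace ((ℕ → Bool) × X) := {}
  rw [← image_snd_rLimitWitnesses (TopologicalSpace.isBasis_countableBasis X)]
  refine MeasurableSet.analyticSet ?_ |>.image_of_continuous continuous_snd
  exact measurableSet_rLimitWitnesses y (TopologicalSpace.countable_countableBasis X)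
    fun _ => TopologicalSpace.isOpen_of_mem_countableBasis
end

section
/- Let X be a Polish space. Then for every sequence y : ω → X, the set Λ_y(FS) of FS-limit points of y is an analytic subset of X. -/
open Set Filter Topology

variable {X : Type*}

theorem lambda_fs_analytic [TopologicalSpace X] [PolishSpace X] (y : ℕ → X) :
    MeasureTheory.AnalyticSet {η | IsFSLimitPoint y η} := by
  borelize X
  set B := TopologicalSpace.countableBasis X with hB
  set A : Set ((ℕ → ℕ) × X) := {p | StrictMono p.1 ∧ ∀ U ∈ B, p.2 ∈ U →
    ∃ m : ℕ, ∀ α : Finset ℕ, α.Nonempty → ↑α ⊆ p.1 '' Ici m → y (∑ i ∈ α, i) ∈ U}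
    with hAdef
  -- measurability helpers
  have hsub : ∀ (m : ℕ) (α : Finset ℕ),
      MeasurableSet {p : (ℕ → ℕ) × X | ↑α ⊆ p.1 '' Ici m} := by
    intro m α
    have : {p : (ℕ → ℕ) × X | ↑α ⊆ p.1 '' Ici m}
        = ⋂ a ∈ α, ⋃ k : ℕ, {p : (ℕ → ℕ) × X | m ≤ k ∧ p.1 k = a} := by
      ext p
      simp only [mem_setOf_eq, mem_iInter, mem_iUnion, Set.subset_def, Finset.mem_coe,
        mem_image, mem_Ici]
    rw [this]
    refine MeasurableSet.biInter (Set.to_countable _) fun a _ => MeasurableSet.iUnion fun k => ?_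
    by_cases hmk : m ≤ k
    · have : {p : (ℕ → ℕ) × X | m ≤ k ∧ p.1 k = a} = {p | p.1 k = a} := by
        ext p; simp [hmk]
      rw [this]
      have hmeas : Measurable (fun p : (ℕ → ℕ) × X => p.1 k) :=
        (measurable_pi_apply k).comp measurable_fst
      exact hmeas (measurableSet_singleton a)
    · have : {p : (ℕ → ℕ) × X | m ≤ k ∧ p.1 k = a} = ∅ := by
        ext p; simp [hmk]
      rw [this]; exact MeasurableSet.empty
  have hAmeas : MeasurableSet A := by
    have h1 : MeasurableSet {p : (ℕ → ℕ) × X | StrictMono p.1} := by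
      have : {p : (ℕ → ℕ) × X | StrictMono p.1}
          = ⋂ i : ℕ, ⋂ j : ℕ, {p | i < j → p.1 i < p.1 j} := by
        ext p
        simp only [mem_setOf_eq, mem_iInter]
        exact ⟨fun h i j hij => h hij, fun h => fun i j hij => h i j hij⟩
      rw [this]
      refine MeasurableSet.iInter fun i => MeasurableSet.iInter fun j => ?_
      by_cases hij : i < j
      · have : {p : (ℕ → ℕ) × X | i < j → p.1 i < p.1 j} = {p | p.1 i < p.1 j} := by
          ext p; simp [hij]
        rw [this]
        have hmi : Measurable (fun p : (ℕ → ℕ) × X => p.1 i) :=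
          (measurable_pi_apply i).comp measurable_fst
        have hmj : Measurable (fun p : (ℕ → ℕ) × X => p.1 j) :=
          (measurable_pi_apply j).comp measurable_fst
        exact measurableSet_lt hmi hmj
      · have : {p : (ℕ → ℕ) × X | i < j → p.1 i < p.1 j} = univ := by
          ext p; simp [hij]
        rw [this]; exact MeasurableSet.univ
    have h2 : MeasurableSet {p : (ℕ → ℕ) × X | ∀ U ∈ B, p.2 ∈ U →
        ∃ m : ℕ, ∀ α : Finset ℕ, α.Nonempty → ↑α ⊆ p.1 '' Ici m → y (∑ i ∈ α, i) ∈ U} := by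
      have : {p : (ℕ → ℕ) × X | ∀ U ∈ B, p.2 ∈ U →
          ∃ m : ℕ, ∀ α : Finset ℕ, α.Nonempty → ↑α ⊆ p.1 '' Ici m → y (∑ i ∈ α, i) ∈ U}
          = ⋂ U ∈ B, ({p : (ℕ → ℕ) × X | p.2 ∈ U}ᶜ ∪
            ⋃ m : ℕ, ⋂ α : Finset ℕ,
              {p : (ℕ → ℕ) × X | α.Nonempty → ↑α ⊆ p.1 '' Ici m → y (∑ i ∈ α, i) ∈ U}) := by
        ext p
        simp only [mem_setOf_eq, mem_iInter, mem_union, mem_iUnion, mem_compl_iff]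
        constructor
        · intro h U hU
          by_cases hpU : p.2 ∈ U
          · exact Or.inr (by obtain ⟨m, hm⟩ := h U hU hpU; exact ⟨m, fun α => hm α⟩)
          · exact Or.inl hpU
        · intro h U hU hpU
          rcases h U hU with h' | ⟨m, hm⟩
          · exact absurd hpU h'
          · exact ⟨m, fun α => hm α⟩
      rw [this]
      refine MeasurableSet.biInter (TopologicalSpace.countable_countableBasis X) fun U hU => ?_
      have hUopen : IsOpen U := TopologicalSpace.isOpen_of_mem_countableBasis hU
      refine MeasurableSet.union ?_ ?_
      · exact (hUopen.measurableSet.preimage measurable_snd).compl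
      · refine MeasurableSet.iUnion fun m => MeasurableSet.iInter fun α => ?_
        by_cases h1' : α.Nonempty
        · by_cases h2' : y (∑ i ∈ α, i) ∈ U
          · have : {p : (ℕ → ℕ) × X | α.Nonempty → ↑α ⊆ p.1 '' Ici m → y (∑ i ∈ α, i) ∈ U}
                = univ := by ext p; simp [h2']
            rw [this]; exact MeasurableSet.univ
          · have : {p : (ℕ → ℕ) × X | α.Nonempty → ↑α ⊆ p.1 '' Ici m → y (∑ i ∈ α, i) ∈ U}
                = {p : (ℕ → ℕ) × X | ↑α ⊆ p.1 '' Ici m}ᶜ := by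
              ext p; simp only [mem_setOf_eq, mem_compl_iff]; tauto
            rw [this]; exact (hsub m α).compl
        · have : {p : (ℕ → ℕ) × X | α.Nonempty → ↑α ⊆ p.1 '' Ici m → y (∑ i ∈ α, i) ∈ U}
              = univ := by ext p; simp [h1']
          rw [this]; exact MeasurableSet.univ
    rw [hAdef]
    exact h1.inter h2
  have himg : {η | IsFSLimitPoint y η} = Prod.snd '' A := by
    ext η
    simp only [mem_setOf_eq, mem_image, Prod.exists]
    constructor
    · rintro ⟨D, hDinf, hD⟩
      have hDinf' : (setOf (· ∈ D)).Infinite := hDinf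
      set f := Nat.nth (· ∈ D) with hf
      have hmono : StrictMono f := Nat.nth_strictMono hDinf'
      have hrange : range f = D := Nat.range_nth_of_infinite hDinf'
      refine ⟨f, η, ⟨hmono, ?_⟩, rfl⟩
      intro U hU hηU
      have hUnhds : U ∈ 𝓝 η :=
        (TopologicalSpace.isOpen_of_mem_countableBasis hU).mem_nhds hηU
      obtain ⟨K, hKfin, hK⟩ := hD U hUnhds
      have hpre : {k : ℕ | f k ∈ K}.Finite := by
        have := hKfin.preimage (f := f) (hmono.injective.injOn)
        exact this
      obtain ⟨m, hm⟩ := hpre.bddAbove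
      refine ⟨m + 1, fun α hαne hαsub => ?_⟩
      refine hK _ ⟨α, ?_, hαne, rfl⟩
      intro a ha
      obtain ⟨k, hk, hka⟩ := hαsub ha
      rw [mem_Ici] at hk
      constructor
      · rw [← hrange]; exact hka ▸ ⟨k, rfl⟩
      · intro haK
        have hfk : f k = a := hka
        have hk' : k ≤ m := hm (show f k ∈ K by rw [hfk]; exact haK)
        omega
    · rintro ⟨f, η', ⟨hmono, hA⟩, rfl⟩
      refine ⟨range f, infinite_range_of_injective hmono.injective, ?_⟩
      intro U hU
      obtain ⟨V, hVB, hηV, hVU⟩ :=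
        (TopologicalSpace.isBasis_countableBasis X).mem_nhds_iff.mp hU
      obtain ⟨m, hm⟩ := hA V hVB hηV
      refine ⟨f '' Iio m, (finite_Iio m).image f, ?_⟩
      rintro n ⟨α, hαsub, hαne, rfl⟩
      refine hVU (hm α hαne ?_)
      intro a ha
      obtain ⟨⟨k, hka⟩, hnot⟩ := hαsub ha
      refine ⟨k, ?_, hka⟩
      rw [mem_Ici]
      by_contra hkm
      exact hnot ⟨k, by simpa using Nat.lt_of_not_le hkm, hka⟩
  rw [himg]
  exact hAmeas.analyticSet.image_of_continuous continuous_snd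
end
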